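/- arXiv:1002.0149 — 8 statements merged into one kernel-verified Lean document; each statement's English description precedes it below -/
import Mathlib

section
/- For integers 2 ≤ j ≤ k, the sum ∑_{s=0}^{j} (-1)^s * C(j,s) * k^(j-s) * (s+k-j)!/(k-j)! is strictly positive. -/
/-!
Since `(s + m)! = ∫₀^∞ t^(s+m) e^(-t) dt`, with `m = k - j` the sum is
`(1/m!) ∫₀^∞ t^m (k - t)^j e^(-t) dt`. Writing `(k - t)^(j+1) = k (k - t)^j - t (k - t)^j` and
integrating `d/dt (t^(m+1) (k - t)^(j+1))` by parts against `e^(-t)` yields, along the diagonal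
`k = j + m`, a three-term recurrence expressing the `(j + 2)`-nd integral as a positive combination
of the `(j + 1)`-st and the `j`-th. As the integral is `k!` for `j = 0` and `0` for `j = 1`,
induction gives positivity for every `j ≠ 1`.
-/

open Polynomial Finset Nat

section
variable {R : Type*} [CommSemiring R]

/-- The functional `p ↦ ∫₀^∞ p(t) e^(-t) dt`, defined algebraically by `tⁿ ↦ n!`. -/
noncomputable def expMoment : R[X] →ₗ[R] R :=
  lsum fun n => (n ! : R) • LinearMap.id

theorem expMoment_monomial (n : ℕ) (a : R) : expMoment (monomial n a) = a * n ! := by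
  simp [expMoment, lsum_apply, mul_comm]

theorem expMoment_X_pow (n : ℕ) : expMoment ((X : R[X]) ^ n) = n ! := by
  rw [← monomial_one_right_eq_X_pow, expMoment_monomial, one_mul]

theorem expMoment_C_mul (a : R) (p : R[X]) : expMoment (C a * p) = a * expMoment p := by
  rw [← smul_eq_C_mul, map_smul, smul_eq_mul]

theorem expMoment_eq_expMoment_derivative_add_coeff_zero (p : R[X]) :
    expMoment p = expMoment (derivative p) + p.coeff 0 := by
  induction p using Polynomial.induction_on' with
  | add p q hp hq => simp only [map_add, coeff_add, hp, hq]; ring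
  | monomial n a =>
    cases n with
    | zero => rw [expMoment_monomial]; simp
    | succ n => simp [expMoment_monomial, Nat.factorial_succ, coeff_monomial]; ring

end

section
variable {R : Type*} [CommRing R]

noncomputable def bergerMoment (k : R) (j m : ℕ) : R :=
  expMoment ((X : R[X]) ^ m * (C k - X) ^ j)

theorem sum_eq_bergerMoment (k : R) (j m : ℕ) :
    ∑ s ∈ range (j + 1), (-1 : R) ^ s * (j.choose s : R) * k ^ (j - s) * ((s + m) ! : R) =
      bergerMoment k j m := by
  rw [bergerMoment, sub_eq_neg_add, add_pow, Finset.mul_sum, map_sum]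
  refine Finset.sum_congr rfl fun s _ => ?_
  have hterm : (X : R[X]) ^ m * ((-X) ^ s * C k ^ (j - s) * (j.choose s : R[X])) =
      monomial (s + m) ((-1) ^ s * (j.choose s : R) * k ^ (j - s)) := by
    simp [← C_mul_X_pow_eq_monomial, neg_pow (X : R[X])]
    ring
  rw [hterm, expMoment_monomial]

theorem bergerMoment_zero (k : R) (m : ℕ) : bergerMoment k 0 m = m ! := by
  rw [bergerMoment, pow_zero, mul_one, expMoment_X_pow]

theorem bergerMoment_succ_left (k : R) (j m : ℕ) :
    bergerMoment k (j + 1) m = k * bergerMoment k j m - bergerMoment k j (m + 1) := by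
  simp only [bergerMoment, ← expMoment_C_mul, ← map_sub]
  congr 1
  ring

theorem bergerMoment_one (m : ℕ) : bergerMoment ((1 + m : ℕ) : R) 1 m = 0 := by
  rw [bergerMoment_succ_left, bergerMoment_zero, bergerMoment_zero, add_comm,
    Nat.factorial_succ]
  push_cast
  ring

theorem bergerMoment_succ_succ (k : R) (j m : ℕ) :
    bergerMoment k (j + 1) (m + 1) =
      (m + 1) * bergerMoment k (j + 1) m - (j + 1) * bergerMoment k j (m + 1) := by
  have hcoeff : ((X : R[X]) ^ (m + 1) * (C k - X) ^ (j + 1)).coeff 0 = 0 := by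
    simp [mul_coeff_zero]
  rw [bergerMoment, expMoment_eq_expMoment_derivative_add_coeff_zero, hcoeff, add_zero]
  simp only [bergerMoment]
  rw [← expMoment_C_mul, ← expMoment_C_mul, ← map_sub]
  congr 1
  simp [derivative_mul, derivative_pow]
  ring

theorem bergerMoment_recurrence (n m : ℕ) :
    ((m : R) + 1) * bergerMoment ((n + 2 + m : ℕ) : R) (n + 2) m =
      (n + 1) * (2 * bergerMoment ((n + 1 + (m + 1) : ℕ) : R) (n + 1) (m + 1) +
        bergerMoment ((n + (m + 2) : ℕ) : R) n (m + 2)) := by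
  have h₁ := bergerMoment_succ_left ((n + 2 + m : ℕ) : R) (n + 1) m
  have h₂ := bergerMoment_succ_succ ((n + 2 + m : ℕ) : R) n m
  have h₃ := bergerMoment_succ_left ((n + 2 + m : ℕ) : R) n (m + 1)
  rw [show n + 1 + (m + 1) = n + 2 + m by omega, show n + (m + 2) = n + 2 + m by omega]
  push_cast at h₁ h₂ h₃ ⊢
  linear_combination ((m : R) + 1) * h₁ - ((n : R) + m + 2) * h₂ - ((n : R) + 1) * h₃

end

theorem bergerMoment_nonneg_and_pos {R : Type*} [CommRing R] [LinearOrder R]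
    [IsStrictOrderedRing R] (n m : ℕ) :
    0 ≤ bergerMoment ((n + m : ℕ) : R) n m ∧ (n ≠ 1 → 0 < bergerMoment ((n + m : ℕ) : R) n m) := by
  induction n using Nat.twoStepInduction generalizing m with
  | zero =>
    rw [bergerMoment_zero]
    exact ⟨by positivity, fun _ => by positivity⟩
  | one => exact ⟨(bergerMoment_one m).ge, fun h => absurd rfl h⟩
  | more n ih₀ ih₁ =>
    have hsum : 0 < 2 * bergerMoment ((n + 1 + (m + 1) : ℕ) : R) (n + 1) (m + 1) +
        bergerMoment ((n + (m + 2) : ℕ) : R) n (m + 2) := by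
      rcases eq_or_ne n 1 with rfl | hn
      · linarith [(ih₁ (m + 1)).2 (by omega), (ih₀ (m + 2)).1]
      · linarith [(ih₁ (m + 1)).1, (ih₀ (m + 2)).2 hn]
    have hprod : 0 < ((m : R) + 1) * bergerMoment ((n + 2 + m : ℕ) : R) (n + 2) m := by
      rw [bergerMoment_recurrence]
      exact mul_pos (by positivity) hsum
    have hpos := pos_of_mul_pos_right hprod (by positivity)
    exact ⟨hpos.le, fun _ => hpos⟩

/-- Berger's lemma: for integers `2 ≤ j ≤ k`, the alternating sum
`∑_{s=0}^{j} (-1)^s C(j,s) k^(j-s) (s+k-j)!/(k-j)!` is strictly positive. -/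
theorem berger_sum_pos (j k : ℕ) (hj : 2 ≤ j) (hjk : j ≤ k) :
    0 < ∑ s ∈ Finset.range (j + 1),
      (-1 : ℚ) ^ s * (j.choose s : ℚ) * (k : ℚ) ^ (j - s) *
        ((s + (k - j)).factorial : ℚ) / ((k - j).factorial : ℚ) := by
  obtain ⟨m, rfl⟩ := Nat.exists_eq_add_of_le hjk
  rw [Nat.add_sub_cancel_left, ← Finset.sum_div, sum_eq_bergerMoment]
  exact div_pos ((bergerMoment_nonneg_and_pos j m).2 (by omega)) (by positivity)
end

section
/- Fix integers r ≥ k ≥ 1 and a real p. For z = (z_1,...,z_r) define s_{r,k,j}(z) = ∑_{K ⊆ [r], |K|=k} ∑_{J ⊆ K, |J|=j} (∏_{i∈J} z_i)(∏_{i∈K∖J} (1 - z_i)). Then for all z with ∑_{i=1}^r z_i = r/2, one has ∑_{j=1}^{k} (2pj/k) · s_{r,k,j}(z) = C(r,k) · p. -/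
/-!
Read `z i` as the probability that vertex `i` lies on one side of the cut, independently.
Then `∑_{J ⊆ K, |J| = j} ∏_{J} z_i ∏_{K∖J} (1 - z_i)` is the probability that the cut meets the
`k`-set `K` in exactly `j` vertices, so `∑_j j · s_{r,k,j}(z)` sums over all `k`-sets the expected
number of their vertices on that side, namely `∑_{i ∈ K} z_i`. Each vertex lies in `C(r-1,k-1)`
of the `k`-sets, so this total is `C(r-1,k-1) · r/2`, and `r · C(r-1,k-1) = k · C(r,k)`.
-/

open Finset

namespace Finset

variable {ι R : Type*} [CommRing R]

theorem sum_powerset_prod_mul_prod_one_sub [DecidableEq ι] (z : ι → R) (S : Finset ι) :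
    ∑ J ∈ S.powerset, (∏ i ∈ J, z i) * ∏ i ∈ S \ J, (1 - z i) = 1 := by
  simpa using (prod_add z (fun i => 1 - z i) S).symm

theorem sum_powerset_card_mul_prod_mul_prod_one_sub [DecidableEq ι] (z : ι → R) (S : Finset ι) :
    ∑ J ∈ S.powerset, (#J : R) * ((∏ i ∈ J, z i) * ∏ i ∈ S \ J, (1 - z i)) = ∑ i ∈ S, z i := by
  induction S using Finset.induction_on with
  | empty => simp
  | insert a S ha ih =>
    have haJ : ∀ J ∈ S.powerset, a ∉ J := fun J hJ h => ha (mem_powerset.1 hJ h)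
    rw [sum_powerset_insert ha, sum_insert ha]
    calc _ = (1 - z a) * ∑ J ∈ S.powerset, (#J : R) * ((∏ i ∈ J, z i) * ∏ i ∈ S \ J, (1 - z i))
          + z a * ∑ J ∈ S.powerset, (#J + 1 : R) * ((∏ i ∈ J, z i) * ∏ i ∈ S \ J, (1 - z i)) := by
          rw [mul_sum, mul_sum]
          congr 1 <;> refine sum_congr rfl fun J hJ => ?_
          · rw [insert_sdiff_of_notMem _ (haJ J hJ), prod_insert (by simp [ha])]
            ring
          · rw [card_insert_of_notMem (haJ J hJ), prod_insert (haJ J hJ), insert_sdiff_insert,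
              sdiff_insert_of_notMem ha]
            push_cast
            ring
      _ = z a + ∑ i ∈ S, z i := by
          simp only [add_mul, one_mul, sum_add_distrib, ih, sum_powerset_prod_mul_prod_one_sub]
          ring

theorem sum_Icc_mul_sum_powersetCard_sum_powersetCard (s : Finset ι) (k : ℕ) (c : ℕ → R)
    (hc : c 0 = 0) (w : Finset ι → Finset ι → R) :
    ∑ j ∈ Icc 1 k, c j * ∑ K ∈ s.powersetCard k, ∑ J ∈ K.powersetCard j, w K J
      = ∑ K ∈ s.powersetCard k, ∑ J ∈ K.powerset, c #J * w K J := by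
  have hzero : ∀ j ∈ range (k + 1), j ∉ Icc 1 k →
      c j * ∑ K ∈ s.powersetCard k, ∑ J ∈ K.powersetCard j, w K J = 0 := fun j hjk hj => by
    obtain rfl : j = 0 := by simp only [mem_range, mem_Icc] at hjk hj; omega
    rw [hc, zero_mul]
  rw [sum_subset (fun j hj => by simp only [mem_range, mem_Icc] at hj ⊢; omega) hzero]
  simp only [mul_sum]
  rw [sum_comm' (t' := s.powersetCard k) (s' := fun _ => range (k + 1)) (fun _ _ => Iff.rfl)]
  refine sum_congr rfl fun K hK => ?_
  rw [sum_powerset, (mem_powersetCard.1 hK).2]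
  exact sum_congr rfl fun j _ => sum_congr rfl fun J hJ => by rw [(mem_powersetCard.1 hJ).2]

theorem sum_powersetCard_sum {M : Type*} [AddCommMonoid M] [DecidableEq ι] (s : Finset ι)
    {k : ℕ} (hk : 1 ≤ k) (f : ι → M) :
    ∑ K ∈ s.powersetCard k, ∑ i ∈ K, f i = (#s - 1).choose (k - 1) • ∑ i ∈ s, f i := by
  rw [sum_comm' (t' := s) (s' := fun i => {K ∈ s.powersetCard k | {i} ⊆ K}), smul_sum]
  · refine sum_congr rfl fun i hi => ?_
    rw [sum_const, card_filter_powersetCard_subset _ _ _ (singleton_subset_iff.2 hi)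
      (by simpa using hk), card_singleton]
  · intro K i
    simp only [mem_filter, mem_powersetCard, singleton_subset_iff]
    exact ⟨fun h => ⟨h, h.1.1 h.2⟩, And.left⟩

end Finset

theorem Nat.mul_choose_sub_one_sub_one (n : ℕ) {k : ℕ} (hk : 1 ≤ k) :
    n * (n - 1).choose (k - 1) = n.choose k * k := by
  obtain ⟨k, rfl⟩ := Nat.exists_eq_add_of_le' hk
  cases n with
  | zero => simp
  | succ n => simpa using Nat.add_one_mul_choose_eq n k

theorem balanced_cut_density_general (r k : ℕ) (hk : 1 ≤ k) (p : ℝ)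
    (z : Fin r → ℝ) (hz : ∑ i, z i = (r : ℝ) / 2) :
    ∑ j ∈ Finset.Icc 1 k, (2 * p * (j : ℝ) / (k : ℝ)) *
        ∑ K ∈ Finset.powersetCard k (Finset.univ : Finset (Fin r)),
          ∑ J ∈ Finset.powersetCard j K,
            (∏ i ∈ J, z i) * ∏ i ∈ K \ J, (1 - z i)
      = (r.choose k : ℝ) * p := by
  have hchoose : (r * (r - 1).choose (k - 1) : ℝ) = r.choose k * k := by
    exact_mod_cast Nat.mul_choose_sub_one_sub_one r hk
  rw [sum_Icc_mul_sum_powersetCard_sum_powersetCard _ _ _ (by simp)]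
  calc _ = 2 * p / k * ∑ K ∈ powersetCard k univ, ∑ J ∈ K.powerset,
          (#J : ℝ) * ((∏ i ∈ J, z i) * ∏ i ∈ K \ J, (1 - z i)) := by
        simp only [mul_sum]
        exact sum_congr rfl fun _ _ => sum_congr rfl fun _ _ => by ring
    _ = 2 * p / k * ((r - 1).choose (k - 1) * (r / 2)) := by
        simp only [sum_powerset_card_mul_prod_mul_prod_one_sub, sum_powersetCard_sum _ hk, hz,
          card_univ, Fintype.card_fin, nsmul_eq_mul]
    _ = r.choose k * p := by
        field_simp
        linear_combination p * hchoose

/-- Identity (4) of Section 3: for `r ≥ k ≥ 1` and any `z` with `∑ z_i = r/2`,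
`∑_{j=1}^{k} (2pj/k) s_{r,k,j}(z) = C(r,k) p`, where
`s_{r,k,j}(z) = ∑_{|K|=k} ∑_{J⊆K,|J|=j} ∏_{i∈J} z_i ∏_{i∈K∖J} (1-z_i)`. -/
theorem balanced_cut_density (r k : ℕ) (hk : 1 ≤ k) (hkr : k ≤ r) (p : ℝ)
    (z : Fin r → ℝ) (hz : ∑ i, z i = (r : ℝ) / 2) :
    ∑ j ∈ Finset.Icc 1 k, (2 * p * (j : ℝ) / (k : ℝ)) *
        ∑ K ∈ Finset.powersetCard k (Finset.univ : Finset (Fin r)),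
          ∑ J ∈ Finset.powersetCard j K,
            (∏ i ∈ J, z i) * ∏ i ∈ K \ J, (1 - z i)
      = (r.choose k : ℝ) * p :=
  balanced_cut_density_general r k hk p z hz
end

section
/- Let t > h ≥ k ≥ 1 with t ≥ h + k. The inclusion matrix B(t,h,k), whose rows are indexed by h-element subsets of [t], columns by k-element subsets of [t], with entry 1 exactly when the k-set is contained in the h-set, has rank (over ℚ) equal to C(t,k). -/
/-!
Let `x` be in the kernel and put `f S = ∑_{K ⊆ S, |K| = k} x K`, so that `f` vanishes on `h`-sets.
Double counting the chains `K ⊆ H ⊆ S` gives `∑_{H ⊆ S, |H| = h} f H = C(|S| - k, h - k) • f S`,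
so `f` vanishes on every set of size at least `h`, in particular (as `h + k ≤ t`) on the complement
of every set of size at most `k`. Inclusion–exclusion then recovers each coordinate:
`x B = ∑_{A ⊆ B} (-1)^|A| • f Aᶜ = 0` for `|B| = k`, so the matrix has full column rank.
-/

open Finset Matrix

namespace Finset

variable {α M : Type*} [DecidableEq α]

theorem sum_powersetCard_sum_powersetCard [AddCommMonoid M] (x : Finset α → M) {k m : ℕ}
    (hkm : k ≤ m) (S : Finset α) :
    ∑ H ∈ S.powersetCard m, ∑ K ∈ H.powersetCard k, x K
      = (#S - k).choose (m - k) • ∑ K ∈ S.powersetCard k, x K := by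
  rw [sum_comm' (t' := S.powersetCard k) (s' := fun K => (S.powersetCard m).filter (K ⊆ ·))]
  · rw [smul_sum]
    refine sum_congr rfl fun K hK => ?_
    obtain ⟨hKS, hK⟩ := mem_powersetCard.mp hK
    rw [sum_const, card_filter_powersetCard_subset K S m hKS (hK ▸ hkm), hK]
  · intro H K
    simp only [mem_powersetCard, mem_filter]
    exact ⟨fun ⟨⟨hHS, hH⟩, hKH, hK⟩ => ⟨⟨⟨hHS, hH⟩, hKH⟩, hKH.trans hHS, hK⟩,
      fun ⟨⟨⟨hHS, hH⟩, hKH⟩, _, hK⟩ => ⟨⟨hHS, hH⟩, hKH, hK⟩⟩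

theorem sum_powersetCard_eq_zero_of_card_le [AddCommMonoid M] [IsAddTorsionFree M]
    {x : Finset α → M} {k m : ℕ} (hkm : k ≤ m)
    (hx : ∀ H : Finset α, #H = m → ∑ K ∈ H.powersetCard k, x K = 0)
    {S : Finset α} (hS : m ≤ #S) : ∑ K ∈ S.powersetCard k, x K = 0 := by
  have hchoose : (#S - k).choose (m - k) ≠ 0 := (Nat.choose_pos (by omega)).ne'
  rw [← nsmul_eq_zero_iff_right hchoose, ← sum_powersetCard_sum_powersetCard x hkm]
  exact sum_eq_zero fun H hH => hx H (mem_powersetCard.mp hH).2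

theorem sum_powerset_zsmul_sum_powersetCard_compl [Fintype α] [AddCommGroup M]
    (x : Finset α → M) {B : Finset α} :
    ∑ A ∈ B.powerset, (-1 : ℤ) ^ #A • ∑ K ∈ Aᶜ.powersetCard #B, x K = x B := by
  simp_rw [smul_sum]
  rw [sum_comm' (t' := univ.powersetCard #B) (s' := fun K => (B \ K).powerset)]
  · simp_rw [← sum_smul, sum_powerset_neg_one_pow_card, sdiff_eq_empty_iff_subset]
    rw [sum_eq_single_of_mem B (mem_powersetCard_univ.mpr rfl)]
    · simp
    · intro K hK hKB
      have hBK : ¬B ⊆ K := fun hBK =>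
        hKB (eq_of_subset_of_card_le hBK (mem_powersetCard_univ.mp hK).le).symm
      rw [if_neg hBK]
      exact zero_smul ℤ _
  · intro A K
    simp only [mem_powerset, mem_powersetCard, subset_sdiff, subset_compl_iff_disjoint_right,
      subset_univ, true_and, disjoint_comm (a := A)]
    tauto

theorem eq_zero_of_sum_powersetCard_eq_zero [Fintype α] [AddCommGroup M] [IsAddTorsionFree M]
    {x : Finset α → M} {h k : ℕ} (hkh : k ≤ h) (hhk : h + k ≤ Fintype.card α)
    (hx : ∀ H : Finset α, #H = h → ∑ K ∈ H.powersetCard k, x K = 0)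
    {B : Finset α} (hB : #B = k) : x B = 0 := by
  rw [← sum_powerset_zsmul_sum_powersetCard_compl x, hB]
  refine sum_eq_zero fun A hA => ?_
  have hAc : h ≤ #Aᶜ := by
    have := card_le_card (mem_powerset.mp hA)
    rw [card_compl]
    omega
  rw [sum_powersetCard_eq_zero_of_card_le hkh hx hAc, smul_zero]

end Finset

def inclusionMatrix (α : Type*) [DecidableEq α] (h k : ℕ) (R : Type*) [Zero R] [One R] :
    Matrix {S : Finset α // #S = h} {S : Finset α // #S = k} R :=
  fun H K => if (K : Finset α) ⊆ H then 1 else 0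

variable {α R : Type*} [DecidableEq α]

theorem inclusionMatrix_mulVec_apply [Fintype α] [NonAssocSemiring R] {h k : ℕ}
    (x : {S : Finset α // #S = k} → R) (H : {S : Finset α // #S = h}) :
    (inclusionMatrix α h k R *ᵥ x) H
      = ∑ K ∈ (H : Finset α).powersetCard k, Function.extend Subtype.val x 0 K := by
  have hfilter :
      (H : Finset α).powersetCard k = (univ.powersetCard k).filter (· ⊆ (H : Finset α)) := by
    ext K
    simp [mem_powersetCard, and_comm]
  rw [hfilter, sum_filter, sum_subtype (F := inferInstance) _ fun K => mem_powersetCard_univ]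
  simp [mulVec, dotProduct, inclusionMatrix]

theorem inclusionMatrix_mulVecLin_injective [Fintype α] [CommRing R] [IsAddTorsionFree R]
    {h k : ℕ} (hkh : k ≤ h) (hhk : h + k ≤ Fintype.card α) :
    Function.Injective (inclusionMatrix α h k R).mulVecLin := by
  refine (injective_iff_map_eq_zero _).mpr fun x hx => funext fun K => ?_
  have hsum (H : Finset α) (hH : #H = h) :
      ∑ K ∈ H.powersetCard k, Function.extend Subtype.val x 0 K = 0 := by
    rw [← inclusionMatrix_mulVec_apply x ⟨H, hH⟩]
    exact congrFun hx _
  simpa [Subtype.val_injective.extend_apply] using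
    eq_zero_of_sum_powersetCard_eq_zero hkh hhk hsum K.2

theorem rank_inclusionMatrix [Fintype α] [Field R] [CharZero R] {h k : ℕ} (hkh : k ≤ h)
    (hhk : h + k ≤ Fintype.card α) :
    (inclusionMatrix α h k R).rank = (Fintype.card α).choose k := by
  rw [rank, LinearMap.finrank_range_of_inj (inclusionMatrix_mulVecLin_injective hkh hhk),
    Module.finrank_fintype_fun_eq_card, Fintype.card_finset_len]

theorem gottlieb_general (t h k : ℕ) (hkh : k ≤ h) (hhkt : h + k ≤ t) :
    Matrix.rank (fun (H : {S : Finset (Fin t) // S.card = h})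
        (K : {S : Finset (Fin t) // S.card = k}) =>
      if (K : Finset (Fin t)) ⊆ (H : Finset (Fin t)) then (1 : ℚ) else 0) = t.choose k := by
  have := rank_inclusionMatrix (α := Fin t) (R := ℚ) hkh (by rwa [Fintype.card_fin])
  rwa [Fintype.card_fin] at this

/-- Gottlieb's theorem: for `t ≥ h + k` (with `h ≥ k ≥ 1`, `h < t`), the inclusion matrix
`B(t,h,k)` (rows: `h`-subsets of `[t]`, columns: `k`-subsets, entry 1 iff the `k`-set is
contained in the `h`-set) has rank `C(t,k)` over `ℚ`. -/
theorem gottlieb (t h k : ℕ) (hk : 1 ≤ k) (hkh : k ≤ h) (hht : h < t) (hhkt : h + k ≤ t) :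
    Matrix.rank (fun (H : {S : Finset (Fin t) // S.card = h})
        (K : {S : Finset (Fin t) // S.card = k}) =>
      if (K : Finset (Fin t)) ⊆ (H : Finset (Fin t)) then (1 : ℚ) else 0) = t.choose k :=
  gottlieb_general t h k hkh hhkt
end

section
/- Let t be even with t ≥ 4 and let v = (v_1, v_2) be positive integers with v_1 + v_2 = t, v_1 > v_2 ≥ 2. Let A be the 0/1 matrix whose columns are indexed by 2-element subsets of [t] and whose rows are indexed by ordered partitions of [t] into parts (S_1, S_2) with |S_i| = v_i, with entry 1 iff the 2-set has one element in S_1 and one in S_2. Then rank(A) = C(t,2). -/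
/-!
A row is determined by `S = S₂`, and its entry at the pair `K` is `[|K ∩ S| = 1]`. We exhibit
an explicit left inverse `B K S = w |K ∩ S|`. Counting the `v₂`-sets `S` by their trace on
`K ∪ L` shows that `(B * A) K L` depends only on `|K ∩ L| ∈ {2, 1, 0}`, so `B * A = 1` amounts
to three linear equations in `w 0, w 1, w 2`. Writing `rᵢ` for the number of `v₂`-sets meeting
a fixed 4-set in a given `i`-set, Pascal's rule shows that the determinant of this system is a
nonzero multiple of `r₂ (r₃ - r₁)`, and `r₃ < r₁` holds because `v₂ < t / 2`.
-/

open Finset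

lemma Matrix.rank_eq_card_width_of_mul_eq_one {R m n : Type*} [CommRing R]
    [StrongRankCondition R] [Fintype m] [Fintype n] [DecidableEq n] {A : Matrix m n R}
    {B : Matrix n m R} (h : B * A = 1) : A.rank = Fintype.card n :=
  le_antisymm A.rank_le_card_width (by simpa [h] using rank_mul_le_right B A)

lemma Nat.choose_lt_choose_add_two {m j : ℕ} (h : 2 * j + 3 ≤ m) :
    m.choose j < m.choose (j + 2) := by
  have hlt : m.choose j < m.choose (j + 1) := Nat.lt_of_mul_lt_mul_right (a := j + 1) <| by
    rw [Nat.choose_succ_right_eq]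
    exact Nat.mul_lt_mul_of_pos_left (by omega) (Nat.choose_pos (by omega))
  have hle : m.choose (j + 1) ≤ m.choose (j + 2) := Nat.le_of_mul_le_mul_right (c := j + 2)
    (by rw [Nat.choose_succ_right_eq]; exact Nat.mul_le_mul_left _ (by omega)) (by omega)
  exact hlt.trans_le hle

/-- The number of `k`-subsets of `U ⊔ V`, `#V = m`, meeting `U` in a prescribed `i`-set. -/
def extensionCount (m k i : ℕ) : ℕ := if i ≤ k then m.choose (k - i) else 0

lemma extensionCount_succ (m k i : ℕ) :
    extensionCount (m + 1) k i = extensionCount m k i + extensionCount m k (i + 1) := by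
  unfold extensionCount
  split_ifs with hi hi'
  · obtain ⟨j, hj⟩ : ∃ j, k - i = j + 1 := ⟨k - i - 1, by omega⟩
    rw [hj, Nat.choose_succ_succ', show k - (i + 1) = j by omega, add_comm]
  · simp [show k - i = 0 by omega]
  · omega
  · rfl

lemma extensionCount_pos {m k i : ℕ} (hi : i ≤ k) (hk : k ≤ m + i) :
    0 < extensionCount m k i := by
  rw [extensionCount, if_pos hi]
  exact Nat.choose_pos (by omega)

-- For `2 * k = m + 4` both sides are equal by the symmetry of binomial coefficients.
lemma extensionCount_three_lt_one {m k : ℕ} (hk : 2 ≤ k) (h : 2 * k < m + 4) :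
    extensionCount m k 3 < extensionCount m k 1 := by
  obtain rfl | hk3 := hk.eq_or_lt
  · rw [extensionCount, extensionCount, if_neg (by omega), if_pos (by omega),
      Nat.choose_one_right]
    omega
  · obtain ⟨j, rfl⟩ : ∃ j, k = j + 3 := ⟨k - 3, by omega⟩
    rw [extensionCount, extensionCount, if_pos (by omega), if_pos (by omega),
      show j + 3 - 3 = j by omega, show j + 3 - 1 = j + 2 by omega]
    exact Nat.choose_lt_choose_add_two (by omega)

lemma extensionCount_det_ne {m k : ℕ} (hk : 2 ≤ k) (h : 2 * k < m + 4) :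
    extensionCount (m + 1) k 1 * extensionCount m k 3 ≠
      extensionCount (m + 1) k 2 * extensionCount m k 1 := by
  rw [extensionCount_succ, extensionCount_succ]
  have h₂ := extensionCount_pos (m := m) (i := 2) hk (by omega)
  have h₃₁ := extensionCount_three_lt_one hk h
  nlinarith

section Finsets

variable {α : Type*} [DecidableEq α]

lemma Finset.sum_powerset_singleton {β : Type*} [AddCommMonoid β] (a : α)
    (f : Finset α → β) : ∑ t ∈ ({a} : Finset α).powerset, f t = f ∅ + f {a} := by
  simpa using sum_powerset_insert (notMem_empty a) f

lemma eq_or_exists_pairs_of_card_eq_two {K L : Finset α} (hK : #K = 2) (hL : #L = 2) :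
    K = L ∨ (∃ x y z, x ≠ y ∧ x ≠ z ∧ y ≠ z ∧ K = {x, y} ∧ L = {x, z}) ∨
      ∃ x y z u, x ≠ y ∧ x ≠ z ∧ x ≠ u ∧ y ≠ z ∧ y ≠ u ∧ z ≠ u ∧ K = {x, y} ∧ L = {z, u} := by
  obtain ⟨a, b, hab, rfl⟩ := card_eq_two.1 hK
  obtain ⟨c, d, hcd, rfl⟩ := card_eq_two.1 hL
  by_cases hac : a = c
  · subst hac
    by_cases hbd : b = d
    · exact Or.inl (by rw [hbd])
    · exact Or.inr (Or.inl ⟨a, b, d, hab, hcd, hbd, rfl, rfl⟩)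
  by_cases had : a = d
  · subst had
    by_cases hbc : b = c
    · exact Or.inl (by rw [hbc, pair_comm])
    · exact Or.inr (Or.inl ⟨a, b, c, hab, hac, hbc, rfl, pair_comm c a⟩)
  by_cases hbc : b = c
  · subst hbc
    exact Or.inr (Or.inl ⟨b, a, d, hab.symm, hcd, had, pair_comm a b, rfl⟩)
  by_cases hbd : b = d
  · subst hbd
    exact Or.inr (Or.inl ⟨b, a, c, hab.symm, hcd.symm, hac, pair_comm a b, pair_comm c b⟩)
  exact Or.inr (Or.inr ⟨a, b, c, d, hab, hac, had, hbc, hbd, hcd, rfl, rfl⟩)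

variable [Fintype α]

lemma card_inter_compl_eq_one_iff {K S : Finset α} (hK : #K = 2) :
    #(K ∩ Sᶜ) = 1 ↔ #(K ∩ S) = 1 := by
  have := card_inter_add_card_sdiff K S
  rw [sdiff_eq_inter_compl] at this
  omega

lemma Finset.eq_compl_of_disjoint_of_union_eq_univ {s t : Finset α}
    (hd : Disjoint s t) (hu : s ∪ t = univ) : s = tᶜ :=
  (IsCompl.of_eq (disjoint_iff.1 hd) hu).eq_compl

lemma card_powersetCard_filter_inter_eq {U A : Finset α} (hA : A ⊆ U) (k : ℕ) :
    #{S ∈ powersetCard k univ | S ∩ U = A} = extensionCount (Fintype.card α - #U) k #A := by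
  unfold extensionCount
  split_ifs with hAk
  · rw [← card_compl, ← card_powersetCard]
    refine card_nbij' (· \ U) (A ∪ ·) ?_ ?_ ?_ ?_
    · intro S hS
      obtain ⟨hSk, rfl⟩ : #S = k ∧ S ∩ U = A := by simpa using hS
      have := card_inter_add_card_sdiff S U
      simp only [mem_coe, mem_powersetCard]
      exact ⟨fun x hx => mem_compl.2 (mem_sdiff.1 hx).2, by omega⟩
    · intro T hT
      obtain ⟨hTU, hTk⟩ : Disjoint T U ∧ #T = k - #A := by
        simpa [subset_compl_iff_disjoint_right] using hT
      have hAT : Disjoint A T := disjoint_of_subset_left hA hTU.symm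
      simp only [coe_filter, mem_powersetCard_univ, Set.mem_ofPred_eq, card_union_of_disjoint hAT,
        hTk, union_inter_distrib_right, inter_eq_left.2 hA, disjoint_iff_inter_eq_empty.1 hTU,
        union_empty, and_true]
      omega
    · intro S hS
      obtain ⟨-, rfl⟩ : #S = k ∧ S ∩ U = A := by simpa using hS
      exact (union_comm _ _).trans (sdiff_union_inter S U)
    · intro T hT
      obtain ⟨hTU, -⟩ : Disjoint T U ∧ #T = k - #A := by
        simpa [subset_compl_iff_disjoint_right] using hT
      change (A ∪ T) \ U = T
      rw [union_sdiff_distrib, sdiff_eq_empty_iff_subset.2 hA, empty_union,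
        sdiff_eq_self_of_disjoint hTU]
  · refine card_eq_zero.2 (filter_eq_empty_iff.2 fun S hS hSA => hAk ?_)
    rw [← mem_powersetCard_univ.1 hS, ← hSA]
    exact card_le_card inter_subset_left

lemma sum_powersetCard_univ_comp_inter {β : Type*} [AddCommMonoid β] (k : ℕ) (U : Finset α)
    (G : Finset α → β) :
    ∑ S ∈ powersetCard k univ, G (S ∩ U) =
      ∑ A ∈ U.powerset, extensionCount (Fintype.card α - #U) k #A • G A := by
  rw [← sum_fiberwise_of_maps_to (t := U.powerset) (g := (· ∩ U))
    fun S _ => mem_powerset.2 inter_subset_right]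
  refine sum_congr rfl fun A hA => ?_
  rw [← card_powersetCard_filter_inter_eq (mem_powerset.1 hA), ← sum_const]
  exact sum_congr rfl fun S hS => by rw [(mem_filter.1 hS).2]

end Finsets

section CrossingMatrix

variable (α : Type*) [DecidableEq α] [Fintype α] (R : Type*) [Field R]

def crossingMatrix (k : ℕ) : Matrix {S : Finset α // #S = k} {K : Finset α // #K = 2} R :=
  Matrix.of fun S K => if #(K.1 ∩ S.1) = 1 then 1 else 0

def crossingWeightMatrix (k : ℕ) (w : ℕ → R) :
    Matrix {K : Finset α // #K = 2} {S : Finset α // #S = k} R :=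
  Matrix.of fun K S => w #(K.1 ∩ S.1)

variable {α R} {k : ℕ} {w : ℕ → R}

lemma crossingWeightMatrix_mul_crossingMatrix_apply (K L : {K : Finset α // #K = 2}) :
    (crossingWeightMatrix α R k w * crossingMatrix α R k) K L =
      ∑ A ∈ (K.1 ∪ L.1).powerset, extensionCount (Fintype.card α - #(K.1 ∪ L.1)) k #A •
        (w #(K.1 ∩ A) * if #(L.1 ∩ A) = 1 then 1 else 0) := by
  have hinter {V : Finset α} (hV : V ⊆ K.1 ∪ L.1) (S : Finset α) :
      V ∩ (S ∩ (K.1 ∪ L.1)) = V ∩ S := by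
    rw [inter_left_comm, inter_eq_left.2 hV, inter_comm]
  rw [← sum_powersetCard_univ_comp_inter]
  simp only [hinter subset_union_left, hinter subset_union_right]
  rw [sum_subtype _ fun S => mem_powersetCard_univ]
  rfl

lemma crossingWeightMatrix_mul_crossingMatrix_apply_self (K : {K : Finset α // #K = 2}) :
    (crossingWeightMatrix α R k w * crossingMatrix α R k) K K =
      2 * extensionCount (Fintype.card α - 2) k 1 * w 1 := by
  obtain ⟨x, y, hxy, hK⟩ := card_eq_two.1 K.2
  rw [crossingWeightMatrix_mul_crossingMatrix_apply, union_self, K.2, hK]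
  simp only [mul_ite, mul_one, mul_zero, smul_ite, nsmul_eq_mul, mem_singleton, hxy,
    not_false_eq_true, sum_powerset_insert, sum_powerset_singleton, inter_empty, card_empty,
    zero_ne_one, ↓reduceIte, mem_insert, hxy.symm, or_true, inter_singleton_of_mem,
    card_singleton, zero_add, or_false, inter_insert_of_mem, insert_empty_eq,
    card_insert_of_notMem, Nat.reduceAdd, OfNat.ofNat_ne_one, add_zero]
  ring

lemma crossingWeightMatrix_mul_crossingMatrix_apply_of_eq_pair_of_eq_pair
    {K L : {K : Finset α // #K = 2}} {x y z : α} (hxy : x ≠ y) (hxz : x ≠ z) (hyz : y ≠ z)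
    (hK : K.1 = {x, y}) (hL : L.1 = {x, z}) :
    (crossingWeightMatrix α R k w * crossingMatrix α R k) K L =
      extensionCount (Fintype.card α - 3) k 1 * (w 0 + w 1) +
        extensionCount (Fintype.card α - 3) k 2 * (w 1 + w 2) := by
  have hU : K.1 ∪ L.1 = {x, y, z} := by rw [hK, hL]; grind
  have hU3 : #({x, y, z} : Finset α) = 3 := by simp [hxy, hxz, hyz]
  rw [crossingWeightMatrix_mul_crossingMatrix_apply, hU, hU3, hK, hL]
  simp only [pair_comm, mul_ite, mul_one, mul_zero, smul_ite, nsmul_eq_mul,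
    mem_insert, hxz, mem_singleton, hxy, or_self, not_false_eq_true, sum_powerset_insert,
    hyz.symm, sum_powerset_singleton, inter_empty, card_empty, zero_ne_one, ↓reduceIte, hyz,
    hxy.symm, inter_singleton_of_notMem, add_zero, hxz.symm, or_false, inter_insert_of_mem,
    inter_insert_of_notMem, insert_empty_eq, card_singleton, card_insert_of_notMem,
    Nat.reduceAdd, inter_singleton_of_mem, zero_add, or_true, OfNat.ofNat_ne_one]
  ring

lemma crossingWeightMatrix_mul_crossingMatrix_apply_of_disjoint
    {K L : {K : Finset α // #K = 2}} {x y z u : α} (hxy : x ≠ y) (hxz : x ≠ z) (hxu : x ≠ u)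
    (hyz : y ≠ z) (hyu : y ≠ u) (hzu : z ≠ u) (hK : K.1 = {x, y}) (hL : L.1 = {z, u}) :
    (crossingWeightMatrix α R k w * crossingMatrix α R k) K L =
      2 * (extensionCount (Fintype.card α - 4) k 1 * w 0 +
        2 * extensionCount (Fintype.card α - 4) k 2 * w 1 +
          extensionCount (Fintype.card α - 4) k 3 * w 2) := by
  have hU : K.1 ∪ L.1 = {x, y, z, u} := by rw [hK, hL]; grind
  have hU4 : #({x, y, z, u} : Finset α) = 4 := by simp [hxy, hxz, hxu, hyz, hyu, hzu]
  rw [crossingWeightMatrix_mul_crossingMatrix_apply, hU, hU4, hK, hL]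
  simp only [mul_ite, mul_one, mul_zero, smul_ite, nsmul_eq_mul, mem_insert, hxy,
    hxz, mem_singleton, hxu, or_self, not_false_eq_true, sum_powerset_insert, hyz, hyu, hzu,
    sum_powerset_singleton, inter_empty, card_empty, zero_ne_one, ↓reduceIte, hzu.symm, or_true,
    inter_singleton_of_mem, card_singleton, hxu.symm, hyu.symm, inter_singleton_of_notMem,
    zero_add, or_false, inter_insert_of_mem, hxz.symm, hyz.symm, inter_insert_of_notMem,
    insert_empty_eq, card_insert_of_notMem, Nat.reduceAdd, OfNat.ofNat_ne_one, add_zero,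
    hxy.symm]
  ring

lemma crossingWeightMatrix_mul_crossingMatrix {m : ℕ} (hm : Fintype.card α = m + 4)
    (hw₂ : 2 * extensionCount (m + 2) k 1 * w 1 = 1)
    (hw₁ : extensionCount (m + 1) k 1 * (w 0 + w 1) +
      extensionCount (m + 1) k 2 * (w 1 + w 2) = 0)
    (hw₀ : 2 * (extensionCount m k 1 * w 0 + 2 * extensionCount m k 2 * w 1 +
      extensionCount m k 3 * w 2) = 0) :
    crossingWeightMatrix α R k w * crossingMatrix α R k = 1 := by
  ext K L
  rcases eq_or_exists_pairs_of_card_eq_two K.2 L.2 with hKL | ⟨x, y, z, hxy, hxz, hyz, hK, hL⟩ |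
    ⟨x, y, z, u, hxy, hxz, hxu, hyz, hyu, hzu, hK, hL⟩
  · rw [Subtype.ext hKL, Matrix.one_apply_eq,
      crossingWeightMatrix_mul_crossingMatrix_apply_self, hm]
    exact hw₂
  · have hne : K ≠ L := fun h => by
      have hy : y ∈ L.1 := h ▸ hK ▸ mem_insert_of_mem (mem_singleton_self y)
      simp [hL, hxy.symm, hyz] at hy
    rw [Matrix.one_apply_ne hne,
      crossingWeightMatrix_mul_crossingMatrix_apply_of_eq_pair_of_eq_pair hxy hxz hyz hK hL, hm]
    exact hw₁
  · have hne : K ≠ L := fun h => by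
      have hx : x ∈ L.1 := h ▸ hK ▸ mem_insert_self x {y}
      simp [hL, hxz, hxu] at hx
    rw [Matrix.one_apply_ne hne,
      crossingWeightMatrix_mul_crossingMatrix_apply_of_disjoint hxy hxz hxu hyz hyu hzu hK hL,
      hm]
    exact hw₀

variable [CharZero R]

-- Cramer's rule, after solving the first equation for `w 1`.
lemma exists_crossing_weights {b q₁ q₂ r₁ r₂ r₃ : R} (hb : b ≠ 0) (hdet : q₁ * r₃ ≠ q₂ * r₁) :
    ∃ w : ℕ → R, 2 * b * w 1 = 1 ∧ q₁ * (w 0 + w 1) + q₂ * (w 1 + w 2) = 0 ∧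
      2 * (r₁ * w 0 + 2 * r₂ * w 1 + r₃ * w 2) = 0 := by
  generalize hD_def : q₁ * r₃ - q₂ * r₁ = D
  have hD : D ≠ 0 := hD_def ▸ sub_ne_zero.2 hdet
  refine ⟨fun i => if i = 0 then (2 * r₂ * q₂ - (q₁ + q₂) * r₃) / (2 * b * D)
    else if i = 1 then 1 / (2 * b)
    else ((q₁ + q₂) * r₁ - 2 * q₁ * r₂) / (2 * b * D), ?_, ?_, ?_⟩
  all_goals simp only [reduceIte, Nat.reduceEqDiff, one_ne_zero]
  · field_simp
  · field_simp
    rw [← hD_def]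
    ring
  · field_simp
    rw [← hD_def]
    ring

theorem crossingMatrix_rank (hk : 2 ≤ k) (hn : 2 * k < Fintype.card α) :
    (crossingMatrix α R k).rank = (Fintype.card α).choose 2 := by
  obtain ⟨m, hm⟩ : ∃ m, Fintype.card α = m + 4 := ⟨Fintype.card α - 4, by omega⟩
  have hb : (extensionCount (m + 2) k 1 : R) ≠ 0 :=
    Nat.cast_ne_zero.2 (extensionCount_pos (by omega) (by omega)).ne'
  have hdet : (extensionCount (m + 1) k 1 * extensionCount m k 3 : R) ≠
      extensionCount (m + 1) k 2 * extensionCount m k 1 := by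
    exact_mod_cast extensionCount_det_ne hk (by omega)
  obtain ⟨w, hw₂, hw₁, hw₀⟩ :=
    exists_crossing_weights (r₂ := (extensionCount m k 2 : R)) hb hdet
  rw [Matrix.rank_eq_card_width_of_mul_eq_one
    (crossingWeightMatrix_mul_crossingMatrix hm hw₂ hw₁ hw₀), Fintype.card_finset_len]

end CrossingMatrix

section OrderedPartition

variable {α : Type*} [DecidableEq α] [Fintype α]

def orderedPartitionEquiv (a b : ℕ) (hab : a + b = Fintype.card α) :
    {P : Finset α × Finset α // #P.1 = a ∧ #P.2 = b ∧ Disjoint P.1 P.2 ∧ P.1 ∪ P.2 = univ} ≃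
      {S : Finset α // #S = b} where
  toFun P := ⟨P.1.2, P.2.2.1⟩
  invFun S := ⟨(S.1ᶜ, S.1), by rw [card_compl, S.2]; omega, S.2, disjoint_compl_left,
    by rw [union_comm, union_compl]⟩
  left_inv P :=
    Subtype.ext (Prod.ext (eq_compl_of_disjoint_of_union_eq_univ P.2.2.2.1 P.2.2.2.2).symm rfl)
  right_inv _ := rfl

lemma crossingMatrix_submatrix_orderedPartitionEquiv (R : Type*) [Field R] {a b : ℕ}
    (hab : a + b = Fintype.card α) :
    (crossingMatrix α R b).submatrix (orderedPartitionEquiv a b hab) (Equiv.refl _) =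
      Matrix.of fun P K => if #(K.1 ∩ P.1.1) = 1 ∧ #(K.1 ∩ P.1.2) = 1 then 1 else 0 := by
  ext P K
  simp only [Matrix.submatrix_apply, crossingMatrix, Matrix.of_apply, orderedPartitionEquiv,
    Equiv.coe_fn_mk, Equiv.refl_apply]
  rw [eq_compl_of_disjoint_of_union_eq_univ P.2.2.2.1 P.2.2.2.2]
  simp only [card_inter_compl_eq_one_iff K.2, and_self]

end OrderedPartition

theorem intersection_matrix_k2_full_rank_general (t v₁ v₂ : ℕ)
    (hv : v₁ + v₂ = t) (h12 : v₂ < v₁) (h2 : 2 ≤ v₂) :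
    Matrix.rank (fun (P : {P : Finset (Fin t) × Finset (Fin t) //
          P.1.card = v₁ ∧ P.2.card = v₂ ∧ Disjoint P.1 P.2 ∧ P.1 ∪ P.2 = Finset.univ})
        (K : {S : Finset (Fin t) // S.card = 2}) =>
      if ((K : Finset (Fin t)) ∩ (P : Finset (Fin t) × Finset (Fin t)).1).card = 1 ∧
         ((K : Finset (Fin t)) ∩ (P : Finset (Fin t) × Finset (Fin t)).2).card = 1
        then (1 : ℚ) else 0) = t.choose 2 := by
  have hab : v₁ + v₂ = Fintype.card (Fin t) := by rw [Fintype.card_fin, hv]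
  have hrank := crossingMatrix_rank (α := Fin t) (R := ℚ) h2 (by rw [Fintype.card_fin]; omega)
  rwa [← Matrix.rank_submatrix _ (orderedPartitionEquiv v₁ v₂ hab) (Equiv.refl _),
    crossingMatrix_submatrix_orderedPartitionEquiv, Fintype.card_fin] at hrank

/-- The `k = 2` unbalanced case of Theorem 4.1 / Lemma 4.6: for `v₁ + v₂ = t`,
`v₁ > v₂ ≥ 2`, the 0/1 matrix whose rows are ordered partitions `(S₁,S₂)` of `[t]` with
`|S_i| = v_i` and whose columns are 2-subsets of `[t]`, with entry 1 iff the 2-set meets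
each part in one element, has rank `C(t,2)`. -/
theorem intersection_matrix_k2_full_rank (t v₁ v₂ : ℕ) (ht : 4 ≤ t) (hte : Even t)
    (hv : v₁ + v₂ = t) (h12 : v₂ < v₁) (h2 : 2 ≤ v₂) :
    Matrix.rank (fun (P : {P : Finset (Fin t) × Finset (Fin t) //
          P.1.card = v₁ ∧ P.2.card = v₂ ∧ Disjoint P.1 P.2 ∧ P.1 ∪ P.2 = Finset.univ})
        (K : {S : Finset (Fin t) // S.card = 2}) =>
      if ((K : Finset (Fin t)) ∩ (P : Finset (Fin t) × Finset (Fin t)).1).card = 1 ∧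
         ((K : Finset (Fin t)) ∩ (P : Finset (Fin t) × Finset (Fin t)).2).card = 1
        then (1 : ℚ) else 0) = t.choose 2 :=
  intersection_matrix_k2_full_rank_general t v₁ v₂ hv h12 h2
end

section
/- Fix k ≥ 2 and integers t ≥ 2k divisible by k. Let A = A_{t,k,v} with v = (t/k,...,t/k) be the 0/1 matrix whose columns are indexed by k-subsets of [t] and rows by partitions of [t] into k parts of size t/k each, with entry 1 iff the k-subset is a transversal of the partition (one element in each part). Then the Gram matrix C = AᵀA lies in the Bose–Mesner algebra of the Johnson scheme J(t,k): there exist nonnegative reals α_0,...,α_k with C = ∑_{i=0}^k α_i W_i, where W_i(X,Y) = 1 iff |X ∩ Y| = k - i; moreover α_i = i! · (t-k-i)! / ((t/k-1)!^{k-i} · (t/k-2)!^i). -/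
open scoped Classical

/-- Partitions of `[t]` into `k` parts of size `t/k` each. -/
def BalancedPartition (t k : ℕ) : Type :=
  {P : Finset (Finset (Fin t)) // P.card = k ∧ (∀ S ∈ P, S.card = t / k) ∧
    ∀ a : Fin t, ∃! S, S ∈ P ∧ a ∈ S}

noncomputable instance (t k : ℕ) : Fintype (BalancedPartition t k) :=
  Subtype.fintype _

/-- The balanced-cut intersection matrix `A_{t,k,(t/k,…,t/k)}`: entry 1 iff the `k`-set is a
transversal of the partition. -/
noncomputable def cutMatrix (t k : ℕ) :
    Matrix (BalancedPartition t k) {S : Finset (Fin t) // S.card = k} ℝ :=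
  fun P X => if ∀ S ∈ P.1, ((X : Finset (Fin t)) ∩ S).card = 1 then 1 else 0

/-- The adjacency matrices of the Johnson scheme `J(t,k)`: `W_i(X,Y) = 1` iff `|X∩Y| = k-i`. -/
noncomputable def johnsonW (t k i : ℕ) :
    Matrix {S : Finset (Fin t) // S.card = k} {S : Finset (Fin t) // S.card = k} ℝ :=
  fun X Y => if ((X : Finset (Fin t)) ∩ (Y : Finset (Fin t))).card = k - i then 1 else 0

/-
A balanced partition `P` having `X` as a transversal is the same thing as the retraction
`r : [t] → X` sending each point to the element of `X` in its block, subject to every fibre of `r`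
having `m = t/k` points; `Y` is then a transversal of `P` iff `r` maps `Y` bijectively onto `X`.
Such an `r` is the identity on `X`, a bijection `Y \ X → X \ Y` (`(k-j)!` choices, where
`j = |X ∩ Y|`), and on the `t-2k+j` points outside `X ∪ Y` an arbitrary map to `X` whose fibres
have `m-1` points over `X ∩ Y` and `m-2` over `X \ Y` (a multinomial coefficient). Hence
`C(X,Y) = (k-j)!(t-2k+j)!/((m-1)!^j (m-2)!^(k-j)) = α_{k-j}`.
-/

open Finset Function
open scoped Nat

section FiberCount
variable {α β : Type*}

def fiberLabellingEquiv (n : β → ℕ) :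
    (Σ f : α → β, ∀ b, {a // f a = b} ≃ Fin (n b)) ≃ (α ≃ Σ b, Fin (n b)) where
  toFun p := (Equiv.sigmaFiberEquiv p.1).symm.trans (Equiv.sigmaCongrRight p.2)
  invFun e := ⟨fun a => (e a).1, fun b =>
    (e.subtypeEquiv fun _ => Iff.rfl).trans (Equiv.sigmaSubtype b)⟩
  left_inv := by
    rintro ⟨f, e⟩
    refine Sigma.ext rfl (heq_of_eq (funext fun b => Equiv.ext fun ⟨a, ha⟩ => ?_))
    subst ha
    rfl
  right_inv _ := Equiv.ext fun _ => rfl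

-- The instance on `γ ≃ Fin n` is left arbitrary so that the lemma rewrites under `Fintype.card_pi`.
lemma card_equiv_fin (γ : Type*) [Fintype γ] (n : ℕ) [Fintype (γ ≃ Fin n)] :
    Fintype.card (γ ≃ Fin n) = if Fintype.card γ = n then n ! else 0 := by
  rw [Fintype.card_eq_nat_card]
  split_ifs with h
  · rw [Nat.card_congr (Equiv.equivCongr (Fintype.equivFinOfCardEq h) (Equiv.refl _)),
      Nat.card_eq_fintype_card, Fintype.card_perm, Fintype.card_fin]
  · have : IsEmpty (γ ≃ Fin n) := ⟨fun e => h (by simpa using Fintype.card_congr e)⟩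
    exact Nat.card_of_isEmpty

theorem card_fiberCard_eq_mul_prod_factorial [Fintype α] [DecidableEq α] [Fintype β] [DecidableEq β]
    (n : β → ℕ) (hn : ∑ b, n b = Fintype.card α) :
    Fintype.card {f : α → β // ∀ b, #{a | f a = b} = n b} * ∏ b, (n b)! =
      (Fintype.card α)! := by
  have e : α ≃ Σ b, Fin (n b) := Fintype.equivOfCardEq (by simp [hn])
  rw [← Fintype.card_equiv e, ← Fintype.card_congr (fiberLabellingEquiv n), Fintype.card_sigma]
  simp only [Fintype.card_pi, card_equiv_fin, Fintype.card_subtype, prod_ite_zero, mem_univ,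
    true_implies, sum_ite, sum_const_zero, add_zero, sum_const, smul_eq_mul]

end FiberCount

section Retraction
variable {α : Type*} [DecidableEq α] {X Y : Finset α}

section Glue
variable [Fintype α]

def glueRetraction (σ : ↥(Y \ X) ≃ ↥(X \ Y)) (g : ↥(X ∪ Y)ᶜ → X) (a : α) : X :=
  if ha : a ∈ X then ⟨a, ha⟩
  else if hb : a ∈ Y then ⟨σ ⟨a, mem_sdiff.2 ⟨hb, ha⟩⟩, (mem_sdiff.1 (σ _).2).1⟩
  else g ⟨a, by simp [ha, hb]⟩

variable (σ : ↥(Y \ X) ≃ ↥(X \ Y)) (g : ↥(X ∪ Y)ᶜ → X)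

lemma leftInverse_glueRetraction : LeftInverse (glueRetraction σ g) (↑) :=
  fun x => by simp [glueRetraction]

lemma coe_glueRetraction_of_sdiff (y : ↥(Y \ X)) : (glueRetraction σ g y : α) = σ y := by
  have hy := mem_sdiff.1 y.2
  simp [glueRetraction, hy.1, hy.2]

lemma glueRetraction_of_compl (z : ↥(X ∪ Y)ᶜ) : glueRetraction σ g z = g z := by
  have hz : (z : α) ∉ X ∧ (z : α) ∉ Y := by simpa [not_or] using z.2
  simp [glueRetraction, hz.1, hz.2]

lemma existsUnique_glueRetraction_eq (x : X) : ∃! y, y ∈ Y ∧ glueRetraction σ g y = x := by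
  by_cases hx : (x : α) ∈ Y
  · refine ⟨x, ⟨hx, leftInverse_glueRetraction σ g x⟩, fun y ⟨hy, hyx⟩ => ?_⟩
    by_cases hyX : y ∈ X
    · simpa [glueRetraction, hyX, Subtype.ext_iff] using hyx
    · have := (mem_sdiff.1 (σ ⟨y, mem_sdiff.2 ⟨hy, hyX⟩⟩).2).2
      rw [← coe_glueRetraction_of_sdiff σ g ⟨y, _⟩, hyx] at this
      exact absurd hx this
  · set y := σ.symm ⟨x, mem_sdiff.2 ⟨x.2, hx⟩⟩
    refine ⟨y, ⟨(mem_sdiff.1 y.2).1, Subtype.ext ?_⟩, fun b ⟨hb, hbx⟩ => ?_⟩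
    · simp [coe_glueRetraction_of_sdiff, y]
    · by_cases hbX : b ∈ X
      · simp only [glueRetraction, hbX, dite_true, Subtype.ext_iff] at hbx
        exact absurd (hbx ▸ hb) hx
      · have h := coe_glueRetraction_of_sdiff σ g ⟨b, mem_sdiff.2 ⟨hb, hbX⟩⟩
        rw [hbx] at h
        have h' : σ ⟨b, _⟩ = ⟨x, mem_sdiff.2 ⟨x.2, hx⟩⟩ := Subtype.ext h.symm
        exact congrArg Subtype.val (σ.eq_symm_apply.2 h')

lemma card_glueRetraction_fiber (x : X) :
    #{a | glueRetraction σ g a = x} = #{z | g z = x} + if (x : α) ∈ Y then 1 else 2 := by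
  have huniv : (univ : Finset α) = X ∪ (Y \ X) ∪ (X ∪ Y)ᶜ := by
    ext; simp only [mem_univ, mem_union, mem_sdiff, mem_compl, true_iff]; tauto
  have hX : ∑ a : X, (if glueRetraction σ g a = x then 1 else 0) = 1 := by
    simp [leftInverse_glueRetraction σ g _]
  have hYX : ∑ y : ↥(Y \ X), (if glueRetraction σ g y = x then 1 else 0) =
      if (x : α) ∈ Y then 0 else 1 := by
    simp only [Subtype.ext_iff, coe_glueRetraction_of_sdiff]
    rw [σ.sum_comp (fun w => if (w : α) = x then 1 else 0),
      sum_coe_sort (X \ Y) (fun w => if w = (x : α) then 1 else 0), sum_ite_eq']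
    simp [x.2]
  have hR : ∑ z : ↥(X ∪ Y)ᶜ, (if glueRetraction σ g z = x then 1 else 0) = #{z | g z = x} := by
    simp only [glueRetraction_of_compl]
    exact (card_filter _ _).symm
  rw [card_filter, huniv, sum_union, sum_union, ← sum_coe_sort X, ← sum_coe_sort (Y \ X),
    ← sum_coe_sort (X ∪ Y)ᶜ, hX, hYX, hR]
  · split_ifs <;> omega
  · exact disjoint_sdiff
  · exact disjoint_left.2 fun a => by simp only [mem_union, mem_sdiff, mem_compl]; tauto

end Glue

section Restrict
variable {r : α → X} (hr : LeftInverse r (↑)) (hY : ∀ x, ∃! y, y ∈ Y ∧ r y = x)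
include hr hY

lemma coe_apply_notMem_of_mem_sdiff {y : α} (hy : y ∈ Y \ X) : (r y : α) ∉ Y := by
  intro h
  obtain ⟨_, _, huniq⟩ := hY (r y)
  have : y = r y := (huniq y ⟨(mem_sdiff.1 hy).1, rfl⟩).trans (huniq _ ⟨h, hr _⟩).symm
  exact (mem_sdiff.1 hy).2 (this ▸ (r y).2)

noncomputable def sdiffEquivOfRetraction : ↥(Y \ X) ≃ ↥(X \ Y) :=
  Equiv.ofBijective
    (fun y => ⟨r y, mem_sdiff.2 ⟨(r y).2, coe_apply_notMem_of_mem_sdiff hr hY y.2⟩⟩) <| by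
    refine ⟨fun y₁ y₂ h => Subtype.ext ?_, fun w => ?_⟩
    · obtain ⟨_, _, huniq⟩ := hY (r y₁)
      have h' : r y₂ = r y₁ := Subtype.ext (congrArg Subtype.val h).symm
      exact (huniq _ ⟨(mem_sdiff.1 y₁.2).1, rfl⟩).trans (huniq _ ⟨(mem_sdiff.1 y₂.2).1, h'⟩).symm
    · obtain ⟨hwX, hwY⟩ := mem_sdiff.1 w.2
      obtain ⟨y, ⟨hy, hyw⟩, -⟩ := hY ⟨w, hwX⟩
      have hyX : y ∉ X := fun h =>
        hwY ((congrArg Subtype.val (hyw.symm.trans (hr ⟨y, h⟩))).symm ▸ hy)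
      exact ⟨⟨y, mem_sdiff.2 ⟨hy, hyX⟩⟩, Subtype.ext (by simp [hyw])⟩

lemma glueRetraction_restrict [Fintype α] :
    glueRetraction (sdiffEquivOfRetraction hr hY) (fun z => r z) = r := by
  funext a
  by_cases haX : a ∈ X
  · simpa [glueRetraction, haX] using (hr ⟨a, haX⟩).symm
  by_cases haY : a ∈ Y
  · simp only [glueRetraction, haX, haY, dite_false, dite_true]
    rfl
  · simp [glueRetraction, haX, haY]

end Restrict

variable [Fintype α] (X Y) {m : ℕ}

noncomputable def retractionEquiv (hm : 2 ≤ m) :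
    {r : α → X // (LeftInverse r (↑) ∧ ∀ x, #{a | r a = x} = m) ∧ ∀ x, ∃! y, y ∈ Y ∧ r y = x} ≃
      (↥(Y \ X) ≃ ↥(X \ Y)) ×
        {g : ↥(X ∪ Y)ᶜ → X // ∀ x, #{z | g z = x} = if (x : α) ∈ Y then m - 1 else m - 2} where
  toFun r := (sdiffEquivOfRetraction r.2.1.1 r.2.2, ⟨fun z => r.1 z, fun x => by
    have h := r.2.1.2 x
    rw [← glueRetraction_restrict r.2.1.1 r.2.2, card_glueRetraction_fiber] at h
    dsimp only
    split_ifs at h ⊢ <;> omega⟩)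
  invFun p := ⟨glueRetraction p.1 p.2.1, ⟨leftInverse_glueRetraction _ _, fun x => by
    rw [card_glueRetraction_fiber, p.2.2 x]
    split_ifs <;> omega⟩, existsUnique_glueRetraction_eq _ _⟩
  left_inv r := Subtype.ext (glueRetraction_restrict r.2.1.1 r.2.2)
  right_inv p := Prod.ext (Equiv.ext fun y => Subtype.ext (coe_glueRetraction_of_sdiff _ _ y))
    (Subtype.ext (funext (glueRetraction_of_compl _ _)))

end Retraction

section Count

@[to_additive]
lemma prod_coe_sort_ite_mem {α M : Type*} [DecidableEq α] [CommMonoid M] {X Y : Finset α}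
    (a b : M) : ∏ x : X, (if (x : α) ∈ Y then a else b) = a ^ #(X ∩ Y) * b ^ #(X \ Y) := by
  rw [prod_coe_sort X (fun x => if x ∈ Y then a else b), prod_ite, prod_const, prod_const,
    filter_mem_eq_inter, filter_notMem_eq_sdiff]

lemma mul_sub_one_add_sub_mul_sub_two {j k m : ℕ} (hj : j ≤ k) (hm : 2 ≤ m) :
    j * (m - 1) + (k - j) * (m - 2) = k * m - k - (k - j) := by
  obtain ⟨m, rfl⟩ : ∃ m', m = m' + 2 := ⟨m - 2, by omega⟩
  obtain ⟨d, rfl⟩ : ∃ d, k = j + d := ⟨k - j, by omega⟩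
  simp only [Nat.add_sub_cancel, Nat.add_sub_cancel_left, show m + 2 - 1 = m + 1 by omega]
  ring_nf
  omega

variable {α : Type*} [Fintype α] [DecidableEq α] {X Y : Finset α}

theorem card_retractions_mul {k m : ℕ} (hX : #X = k) (hY : #Y = k) (hm : 2 ≤ m)
    (hα : k * m = Fintype.card α) :
    Fintype.card {r : α → X //
        (LeftInverse r (↑) ∧ ∀ x, #{a | r a = x} = m) ∧ ∀ x, ∃! y, y ∈ Y ∧ r y = x} *
      ((m - 1)! ^ #(X ∩ Y) * (m - 2)! ^ (k - #(X ∩ Y))) =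
    (k - #(X ∩ Y))! * (Fintype.card α - k - (k - #(X ∩ Y)))! := by
  have hj : #(X ∩ Y) ≤ k := hX ▸ card_le_card inter_subset_left
  have hXY : #(X \ Y) = k - #(X ∩ Y) := by rw [card_sdiff, inter_comm, hX]
  have hYX : #(Y \ X) = k - #(X ∩ Y) := by rw [card_sdiff, hY]
  have hcompl : #(X ∪ Y)ᶜ = Fintype.card α - k - (k - #(X ∩ Y)) := by
    have := card_union_add_card_inter X Y
    rw [card_compl]
    omega
  have hsum : ∑ x : X, (if (x : α) ∈ Y then m - 1 else m - 2) = Fintype.card ↥(X ∪ Y)ᶜ := by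
    rw [sum_coe_sort_ite_mem, smul_eq_mul, smul_eq_mul, hXY,
      mul_sub_one_add_sub_mul_sub_two hj hm, hα, Fintype.card_coe, hcompl]
  have hprod : ∏ x : X, (if (x : α) ∈ Y then m - 1 else m - 2)! =
      (m - 1)! ^ #(X ∩ Y) * (m - 2)! ^ (k - #(X ∩ Y)) := by
    simp only [apply_ite Nat.factorial, prod_coe_sort_ite_mem, hXY]
  have hσ : Fintype.card ↥(Y \ X) = Fintype.card ↥(X \ Y) := by
    rw [Fintype.card_coe, Fintype.card_coe, hXY, hYX]
  rw [Fintype.card_congr (retractionEquiv X Y hm), Fintype.card_prod, mul_assoc, ← hprod,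
    card_fiberCard_eq_mul_prod_factorial _ hsum, Fintype.card_coe, hcompl,
    Fintype.card_equiv (Fintype.equivOfCardEq hσ), Fintype.card_coe, hYX]

end Count

namespace BalancedPartition
variable {t k : ℕ}

def IsTransversal (X : Finset (Fin t)) (P : BalancedPartition t k) : Prop :=
  ∀ S ∈ P.1, #(X ∩ S) = 1

noncomputable def block (P : BalancedPartition t k) (a : Fin t) : Finset (Fin t) :=
  (P.2.2.2 a).choose

variable {P : BalancedPartition t k} {X Y S : Finset (Fin t)} {a b : Fin t}

lemma block_mem (P : BalancedPartition t k) (a : Fin t) : P.block a ∈ P.1 :=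
  (P.2.2.2 a).choose_spec.1.1

lemma mem_block_self (P : BalancedPartition t k) (a : Fin t) : a ∈ P.block a :=
  (P.2.2.2 a).choose_spec.1.2

lemma block_eq (hS : S ∈ P.1) (ha : a ∈ S) : P.block a = S :=
  ((P.2.2.2 a).choose_spec.2 S ⟨hS, ha⟩).symm

lemma mem_block_comm : b ∈ P.block a ↔ a ∈ P.block b :=
  ⟨fun h => block_eq (P.block_mem a) h ▸ P.mem_block_self a,
    fun h => block_eq (P.block_mem b) h ▸ P.mem_block_self b⟩

noncomputable def retraction (hX : P.IsTransversal X) (a : Fin t) : X :=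
  ⟨(card_eq_one.1 (hX _ (P.block_mem a))).choose,
    (mem_inter.1 ((card_eq_one.1 (hX _ (P.block_mem a))).choose_spec ▸ mem_singleton_self _)).1⟩

lemma retraction_eq_iff (hX : P.IsTransversal X) (x : X) :
    P.retraction hX a = x ↔ (x : Fin t) ∈ P.block a := by
  have h := (card_eq_one.1 (hX _ (P.block_mem a))).choose_spec
  refine ⟨fun hx => hx ▸ (mem_inter.1 (h ▸ mem_singleton_self _)).2, fun hx => Subtype.ext ?_⟩
  exact (mem_singleton.1 (h ▸ mem_inter.2 ⟨x.2, hx⟩)).symm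

lemma leftInverse_retraction (hX : P.IsTransversal X) : LeftInverse (P.retraction hX) (↑) :=
  fun x => (retraction_eq_iff hX x).2 (P.mem_block_self x)

lemma filter_retraction_eq (hX : P.IsTransversal X) (x : X) :
    ({a | P.retraction hX a = x} : Finset (Fin t)) = P.block x := by
  ext a
  rw [mem_filter, retraction_eq_iff, mem_block_comm, and_iff_right (mem_univ a)]

noncomputable def ofRetraction (hX : #X = k) (r : Fin t → X) (hr : LeftInverse r (↑))
    (hfib : ∀ x, #{a | r a = x} = t / k) : BalancedPartition t k := by
  refine ⟨univ.image fun x => ({a | r a = x} : Finset (Fin t)), ?_, ?_, fun a => ?_⟩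
  · rw [card_image_of_injective, card_univ, Fintype.card_coe, hX]
    intro x y hxy
    simpa [hr x] using (Finset.ext_iff.1 hxy x).1
  · rintro S hS
    obtain ⟨x, -, rfl⟩ := mem_image.1 hS
    exact hfib x
  · refine ⟨({b | r b = r a} : Finset (Fin t)), ⟨mem_image_of_mem _ (mem_univ _), by simp⟩, ?_⟩
    rintro S ⟨hS, haS⟩
    obtain ⟨x, -, rfl⟩ := mem_image.1 hS
    rw [(mem_filter.1 haS).2]

section
variable {hX : #X = k} {r : Fin t → X} {hr : LeftInverse r (↑)}
  {hfib : ∀ x, #{a | r a = x} = t / k}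

lemma isTransversal_ofRetraction_iff :
    (ofRetraction hX r hr hfib).IsTransversal Y ↔ ∀ x, ∃! y, y ∈ Y ∧ r y = x := by
  simp only [IsTransversal, ofRetraction, forall_mem_image, mem_univ, true_implies,
    card_eq_one_iff_existsUnique, mem_inter, mem_filter, true_and]

lemma isTransversal_ofRetraction : (ofRetraction hX r hr hfib).IsTransversal X :=
  isTransversal_ofRetraction_iff.2 fun x =>
    ⟨x, ⟨x.2, hr x⟩, fun y ⟨hy, hyx⟩ => congrArg Subtype.val ((hr ⟨y, hy⟩).symm.trans hyx)⟩

lemma retraction_ofRetraction :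
    (ofRetraction hX r hr hfib).retraction isTransversal_ofRetraction = r := by
  funext a
  rw [retraction_eq_iff, block_eq (mem_image_of_mem _ (mem_univ (r a))) (by simp)]
  simp [hr (r a)]

end

noncomputable def transversalEquiv (hX : #X = k) :
    {P : BalancedPartition t k // P.IsTransversal X} ≃
      {r : Fin t → X // LeftInverse r (↑) ∧ ∀ x, #{a | r a = x} = t / k} where
  toFun P := ⟨P.1.retraction P.2, leftInverse_retraction P.2, fun x => by
    rw [filter_retraction_eq]
    exact P.1.2.2.1 _ (P.1.block_mem x)⟩
  invFun r := ⟨ofRetraction hX r.1 r.2.1 r.2.2, isTransversal_ofRetraction⟩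
  left_inv P := by
    refine Subtype.ext (Subtype.ext (Finset.ext fun S => ?_))
    simp only [ofRetraction, filter_retraction_eq, mem_image, mem_univ, true_and]
    refine ⟨fun ⟨x, hx⟩ => hx ▸ P.1.block_mem x, fun hS => ?_⟩
    obtain ⟨x, hx⟩ := card_pos.1 (by rw [P.2 S hS]; exact one_pos)
    exact ⟨⟨x, (mem_inter.1 hx).1⟩, block_eq hS (mem_inter.1 hx).2⟩
  right_inv r := Subtype.ext (retraction_ofRetraction (hX := hX) (hr := r.2.1) (hfib := r.2.2))

theorem card_isTransversal_and_mul (hX : #X = k) (hY : #Y = k) (hm : 2 ≤ t / k)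
    (htk : k * (t / k) = t) :
    Fintype.card {P : BalancedPartition t k // P.IsTransversal X ∧ P.IsTransversal Y} *
      ((t / k - 1)! ^ #(X ∩ Y) * (t / k - 2)! ^ (k - #(X ∩ Y))) =
    (k - #(X ∩ Y))! * (t - k - (k - #(X ∩ Y)))! := by
  have e : {P : BalancedPartition t k // P.IsTransversal X ∧ P.IsTransversal Y} ≃
      {r : Fin t → X // (LeftInverse r (↑) ∧ ∀ x, #{a | r a = x} = t / k) ∧
        ∀ x, ∃! y, y ∈ Y ∧ r y = x} :=
    (Equiv.subtypeSubtypeEquivSubtypeInter _ _).symm.trans <|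
      ((transversalEquiv hX).symm.subtypeEquiv fun r =>
        (isTransversal_ofRetraction_iff (hX := hX) (hr := r.2.1) (hfib := r.2.2)).symm).symm.trans
        (Equiv.subtypeSubtypeEquivSubtypeInter _ _)
  have h := card_retractions_mul hX hY hm (htk.trans (Fintype.card_fin t).symm)
  rwa [Fintype.card_fin, ← Fintype.card_congr e] at h

lemma transpose_mul_self_cutMatrix_apply (X Y : {S : Finset (Fin t) // #S = k}) :
    ((cutMatrix t k).transpose * cutMatrix t k) X Y =
      Fintype.card {P : BalancedPartition t k // P.IsTransversal X ∧ P.IsTransversal Y} := by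
  simp only [Matrix.mul_apply, Matrix.transpose_apply, cutMatrix, ite_zero_mul_ite_zero, mul_one]
  rw [sum_boole, Fintype.card_subtype]
  congr

end BalancedPartition

lemma sum_smul_johnsonW_apply {t k : ℕ} (c : ℕ → ℝ) (X Y : {S : Finset (Fin t) // #S = k}) :
    (∑ i ∈ range (k + 1), c i • johnsonW t k i) X Y = c (k - #(X.1 ∩ Y.1)) := by
  have hj : #(X.1 ∩ Y.1) ≤ k := (card_le_card inter_subset_left).trans_eq X.2
  simp only [Matrix.sum_apply, Matrix.smul_apply, johnsonW, smul_eq_mul, mul_ite, mul_one,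
    mul_zero]
  rw [sum_congr rfl fun i hi => if_congr (show _ ↔ i = k - #(X.1 ∩ Y.1) by
    rw [mem_range] at hi; omega) rfl rfl, sum_ite_eq', if_pos (mem_range.2 (by omega))]

/-- The Gram matrix `AᵀA` of the balanced-cut intersection matrix lies in the Bose–Mesner
algebra of the Johnson scheme `J(t,k)`, with coefficients
`α_i = i!(t-k-i)!/((t/k-1)!^{k-i} (t/k-2)!^i) ≥ 0`. -/
theorem gram_in_bose_mesner (k t : ℕ) (hk : 2 ≤ k) (ht : 2 * k ≤ t) (hdvd : k ∣ t) :
    ∃ α : ℕ → ℝ, (∀ i ≤ k, 0 ≤ α i) ∧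
      (∀ i ≤ k, α i = ((i.factorial : ℝ) * ((t - k - i).factorial : ℝ)) /
        (((t / k - 1).factorial : ℝ) ^ (k - i) * ((t / k - 2).factorial : ℝ) ^ i)) ∧
      (cutMatrix t k).transpose * cutMatrix t k
        = ∑ i ∈ Finset.range (k + 1), α i • johnsonW t k i := by
  have hm : 2 ≤ t / k := (Nat.le_div_iff_mul_le (by omega)).2 ht
  refine ⟨fun i => ((i.factorial : ℝ) * ((t - k - i).factorial : ℝ)) /
      (((t / k - 1).factorial : ℝ) ^ (k - i) * ((t / k - 2).factorial : ℝ) ^ i),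
    fun i _ => by positivity, fun i _ => rfl, ?_⟩
  ext X Y
  rw [BalancedPartition.transpose_mul_self_cutMatrix_apply, sum_smul_johnsonW_apply]
  have hj : #(X.1 ∩ Y.1) ≤ k := (card_le_card inter_subset_left).trans_eq X.2
  rw [Nat.sub_sub_self hj, eq_div_iff (by positivity)]
  exact_mod_cast BalancedPartition.card_isTransversal_and_mul X.2 Y.2 hm (Nat.mul_div_cancel' hdvd)
end

section
/- Fix integers k ≥ 2 and t ≥ t_0(k) with k | t, and let v = (v_1,...,v_k) be positive integers with ∑ v_i = t, each v_i ≥ k, and v not the constant vector (t/k,...,t/k). Then the intersection matrix A_{t,k,v} (columns indexed by k-subsets of [t], rows by ordered partitions of [t] into parts of sizes v_1,...,v_k, entry 1 iff the k-set is a transversal of the partition) has rank C(t,k). -/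
/-!
Instead of Gottlieb's rank theorem, a symmetrisation argument. A vector `c` in the kernel of
`A_{t,k,v}` is a function on `k`-sets whose sum over the transversals of every ordered partition
vanishes. Fix a `k`-set `A` and sum `c ∘ σ` over the permutations `σ` fixing `A`. The result is
again in the kernel, equals `|Stab A| • c A` at `A`, and, because `Stab A` acts transitively on
the `k`-sets meeting `A` in `m` points, has the form `S ↦ φ #(S ∩ A)`. Transversals of a
partition `P` correspond to choice functions `f ∈ ∏ P i`, with `#(S ∩ A) = #{i | f i ∈ A}`.
If `A` meets exactly the parts indexed by `I`, every transversal meets `A` in at most `#I`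
points and some meets it in exactly `#I`, so `φ j = 0` for `j < m` forces `φ m = 0`
(`1 ≤ m ≤ k`). If `A ⊆ P i`, the kernel equation reads `(v i - k) φ 0 + k φ 1 = 0`; two parts
of different sizes then give `φ 0 = 0`. Hence `φ k = 0`, and `c A = 0`.
-/

open scoped Classical

/-- Ordered partitions of `[t]` into `k` parts of prescribed sizes `v 0, …, v (k-1)`. -/
def OrderedPartition (t k : ℕ) (v : Fin k → ℕ) : Type :=
  {P : Fin k → Finset (Fin t) // (∀ i, (P i).card = v i) ∧
    (∀ i j, i ≠ j → Disjoint (P i) (P j)) ∧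
    Finset.univ.biUnion P = Finset.univ}

noncomputable instance (t k : ℕ) (v : Fin k → ℕ) : Fintype (OrderedPartition t k v) :=
  Subtype.fintype _

/-- The intersection matrix `A_{t,k,v}`: entry 1 iff the `k`-set is a transversal of the
ordered partition. -/
noncomputable def cutMatrixV (t k : ℕ) (v : Fin k → ℕ) :
    Matrix (OrderedPartition t k v) {S : Finset (Fin t) // S.card = k} ℚ :=
  fun P X => if ∀ i, ((X : Finset (Fin t)) ∩ P.1 i).card = 1 then 1 else 0

open Finset Equiv MulAction Function
open scoped Pointwise

section Perm

variable {α : Type*} [Fintype α] [DecidableEq α]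

omit [DecidableEq α] in
theorem exists_perm_comp_eq_of_card_fiber_eq {β : Type*} [DecidableEq β] (f g : α → β)
    (h : ∀ b, #{x | f x = b} = #{x | g x = b}) : ∃ σ : Perm α, g ∘ σ = f :=
  ⟨Equiv.ofFiberEquiv fun b => Fintype.equivOfCardEq (by simpa [Fintype.card_subtype] using h b),
    funext (Equiv.ofFiberEquiv_map _)⟩

theorem exists_mem_stabilizer_smul_eq {A S S' : Finset α} (hS : #S = #S')
    (hA : #(S ∩ A) = #(S' ∩ A)) : ∃ σ ∈ stabilizer (Perm α) A, σ • S = S' := by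
  obtain ⟨σ, hσ⟩ := exists_perm_comp_eq_of_card_fiber_eq
    (fun x => (decide (x ∈ S), decide (x ∈ A))) (fun x => (decide (x ∈ S'), decide (x ∈ A))) <| by
      have hSA := card_union_add_card_inter S A
      have hSA' := card_union_add_card_inter S' A
      -- the four fibres are `(S ∪ A)ᶜ`, `A \ S`, `S \ A` and `S ∩ A`
      rintro ⟨_ | _, _ | _⟩ <;>
        simp only [Prod.mk.injEq, decide_eq_true_eq, decide_eq_false_iff_not, filter_and,
          filter_not, subset_univ, filter_mem_eq_of_subset, ← compl_eq_univ_sdiff, ← compl_union,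
          card_compl]
      · omega
      · rw [inter_comm, ← sdiff_eq_inter_compl, inter_comm _ A, ← sdiff_eq_inter_compl,
          card_sdiff, card_sdiff, hA]
      · rw [← sdiff_eq_inter_compl, ← sdiff_eq_inter_compl, card_sdiff, card_sdiff, inter_comm A,
          inter_comm A, hA, hS]
      · exact hA
  have hmem : ∀ T T' : Finset α, (∀ x, σ x ∈ T' ↔ x ∈ T) → σ • T = T' := by
    intro T T' hT
    ext y
    rw [← inv_smul_mem_iff, Perm.smul_def, ← hT]
    simp
  have hσx : ∀ x, (σ x ∈ S' ↔ x ∈ S) ∧ (σ x ∈ A ↔ x ∈ A) := fun x => by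
    simpa using congrFun hσ x
  exact ⟨σ, hmem A A fun x => (hσx x).2, hmem S S' fun x => (hσx x).1⟩

variable {M : Type*} [AddCommMonoid M]

noncomputable def stabilizerSum (A : Finset α) (F : Finset α → M) (S : Finset α) : M :=
  ∑ g : stabilizer (Perm α) A, F ((g : Perm α) • S)

theorem stabilizerSum_smul {A : Finset α} (F : Finset α → M) {σ : Perm α}
    (hσ : σ ∈ stabilizer (Perm α) A) (S : Finset α) :
    stabilizerSum A F (σ • S) = stabilizerSum A F S :=
  Fintype.sum_equiv (Equiv.mulRight ⟨σ, hσ⟩) _ _ fun g => by simp [mul_smul]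

theorem stabilizerSum_self (A : Finset α) (F : Finset α → M) :
    stabilizerSum A F A = Fintype.card (stabilizer (Perm α) A) • F A := by
  simp [stabilizerSum, mem_stabilizer_iff.1 (Subtype.prop _)]

theorem stabilizerSum_eq_of_card_inter_eq {A S S' : Finset α} (F : Finset α → M) (hS : #S = #S')
    (hA : #(S ∩ A) = #(S' ∩ A)) : stabilizerSum A F S = stabilizerSum A F S' := by
  obtain ⟨σ, hσ, rfl⟩ := exists_mem_stabilizer_smul_eq hS hA
  exact (stabilizerSum_smul F hσ S).symm

theorem exists_stabilizerSum_eq_comp_card_inter (A : Finset α) (F : Finset α → M) (k : ℕ) :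
    ∃ φ : ℕ → M, ∀ S, #S = k → stabilizerSum A F S = φ #(S ∩ A) := by
  have hfac : FactorsThrough (fun S : {S : Finset α // #S = k} => stabilizerSum A F S)
      fun S => #(S.1 ∩ A) := fun S S' h =>
    stabilizerSum_eq_of_card_inter_eq F (S.2.trans S'.2.symm) h
  exact ⟨extend (fun S : {S : Finset α // #S = k} => #(S.1 ∩ A)) (fun S => stabilizerSum A F S) 0,
    fun S hS => (hfac.extend_apply 0 ⟨S, hS⟩).symm⟩

end Perm

section Transversal

variable {α ι M : Type*} [DecidableEq α] [AddCommMonoid M] {Q : ι → Finset α}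

def IsTransversal (Q : ι → Finset α) (S : Finset α) : Prop := ∀ i, #(S ∩ Q i) = 1

theorem isTransversal_smul_iff {G : Type*} [Group G] [MulAction G α] (g : G) (S : Finset α) :
    IsTransversal (fun i => g • Q i) (g • S) ↔ IsTransversal Q S := by
  simp [IsTransversal, ← smul_finset_inter, card_smul_finset]

variable [Fintype ι] [DecidableEq ι] {f : ι → α}

omit [DecidableEq α] in
theorem injective_of_mem_piFinset (hQ : Pairwise (Disjoint on Q)) (hf : f ∈ Fintype.piFinset Q) :
    Injective f := by
  intro i j hij
  by_contra hne
  exact disjoint_left.1 (hQ hne) (Fintype.mem_piFinset.1 hf i)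
    (hij ▸ Fintype.mem_piFinset.1 hf j)

theorem image_inter_eq_singleton (hQ : Pairwise (Disjoint on Q)) (hf : f ∈ Fintype.piFinset Q)
    (i : ι) : univ.image f ∩ Q i = {f i} := by
  ext x
  simp only [mem_inter, mem_image, mem_univ, true_and, mem_singleton]
  constructor
  · rintro ⟨⟨j, rfl⟩, hj⟩
    rw [(injective_of_mem_piFinset hQ hf).eq_iff]
    by_contra hne
    exact disjoint_left.1 (hQ hne) (Fintype.mem_piFinset.1 hf j) hj
  · rintro rfl
    exact ⟨⟨i, rfl⟩, Fintype.mem_piFinset.1 hf i⟩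

omit [DecidableEq ι] in
theorem card_image_inter (hf : Injective f) (A : Finset α) :
    #(univ.image f ∩ A) = #{i | f i ∈ A} := by
  rw [← filter_mem_eq_inter, filter_image, card_image_of_injective _ hf]

theorem sum_isTransversal_eq_sum_piFinset [Fintype α] (hQ : Pairwise (Disjoint on Q))
    (hcover : ∀ x, ∃ i, x ∈ Q i) (F : Finset α → M) :
    ∑ S with IsTransversal Q S, F S = ∑ f ∈ Fintype.piFinset Q, F (univ.image f) := by
  refine (sum_bij (fun f _ => univ.image f) (fun f hf => ?_) (fun f hf g hg hfg => ?_)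
    (fun S hS => ?_) fun _ _ => rfl).symm
  · exact mem_filter.2 ⟨mem_univ _, fun i => by rw [image_inter_eq_singleton hQ hf, card_singleton]⟩
  · funext i
    have := image_inter_eq_singleton hQ hg i
    rw [← hfg, image_inter_eq_singleton hQ hf] at this
    exact singleton_injective this
  · have hS' : ∀ i, ∃ x, S ∩ Q i = {x} := fun i => card_eq_one.1 ((mem_filter.1 hS).2 i)
    choose g hg using hS'
    have hgQ : ∀ i, g i ∈ S ∧ g i ∈ Q i := fun i => mem_inter.1 (hg i ▸ mem_singleton_self _)
    refine ⟨g, Fintype.mem_piFinset.2 fun i => (hgQ i).2, ?_⟩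
    ext x
    simp only [mem_image, mem_univ, true_and]
    constructor
    · rintro ⟨i, rfl⟩
      exact (hgQ i).1
    · intro hx
      obtain ⟨i, hi⟩ := hcover x
      exact ⟨i, (mem_singleton.1 (hg i ▸ mem_inter.2 ⟨hx, hi⟩)).symm⟩

omit [DecidableEq α] in
theorem sum_piFinset_comp_apply (Q : ι → Finset α) (i : ι) (ψ : α → M) :
    ∑ f ∈ Fintype.piFinset Q, ψ (f i) = (∏ j ∈ univ.erase i, #(Q j)) • ∑ y ∈ Q i, ψ y := by
  classical
  rw [← sum_fiberwise_of_maps_to (g := fun f => f i) (t := Q i)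
    fun f hf => Fintype.mem_piFinset.1 hf i, smul_sum]
  refine sum_congr rfl fun y hy => ?_
  rw [sum_congr rfl fun f hf => by rw [(mem_filter.1 hf).2], sum_const,
    Fintype.card_filter_piFinset_eq_of_mem Q i hy]

end Transversal

theorem exists_pairwise_disjoint_subset_card_eq {α ι : Type*} [DecidableEq α] [Fintype ι]
    (U : Finset α) (b : ι → ℕ) (h : ∑ i, b i = #U) :
    ∃ C : ι → Finset α, (∀ i, C i ⊆ U) ∧ (∀ i, #(C i) = b i) ∧ Pairwise (Disjoint on C) := by
  let e : (Σ i, Fin (b i)) ≃ U := Fintype.equivOfCardEq (by simp [h])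
  refine ⟨fun i => univ.image fun j => (e ⟨i, j⟩ : α), fun i => ?_, fun i => ?_, fun i i' hi => ?_⟩
  · simp [image_subset_iff]
  · refine (card_image_of_injective _ fun j j' hj => ?_).trans (card_fin _)
    simpa using e.injective (Subtype.ext hj)
  · simp only [disjoint_left, mem_image, mem_univ, true_and]
    rintro _ ⟨j, rfl⟩ ⟨j', hj⟩
    exact hi (congrArg Sigma.fst (e.injective (Subtype.ext hj))).symm

namespace OrderedPartition

variable {t k : ℕ} {v : Fin k → ℕ}

theorem pairwise_disjoint (P : OrderedPartition t k v) : Pairwise (Disjoint on P.1) :=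
  fun i j hij => P.2.2.1 i j hij

theorem exists_mem (P : OrderedPartition t k v) (x : Fin t) : ∃ i, x ∈ P.1 i := by
  have hx : x ∈ univ.biUnion P.1 := by rw [P.2.2.2]; exact mem_univ x
  simpa using hx

noncomputable instance : SMul (Perm (Fin t)) (OrderedPartition t k v) where
  smul g P := ⟨fun i => g • P.1 i, fun i => by rw [card_smul_finset, P.2.1],
    fun i j hij => by
      rw [disjoint_iff_inter_eq_empty, ← smul_finset_inter,
        disjoint_iff_inter_eq_empty.1 (P.2.2.1 i j hij), smul_finset_empty],
    eq_univ_of_forall fun x => by simpa [← inv_smul_mem_iff] using P.exists_mem (g⁻¹ • x)⟩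

theorem sum_isTransversal_smul {M : Type*} [AddCommMonoid M] (g : Perm (Fin t))
    (P : OrderedPartition t k v) (F : Finset (Fin t) → M) :
    ∑ S with IsTransversal P.1 S, F (g • S) = ∑ S with IsTransversal (g • P).1 S, F S :=
  sum_equiv (MulAction.toPerm g) (fun S => by
    simp only [mem_filter, mem_univ, true_and, MulAction.toPerm_apply]
    exact (isTransversal_smul_iff g S).symm) fun _ _ => rfl

theorem exists_card_inter_eq (hv : ∑ i, v i = t) (A : Finset (Fin t)) (a : Fin k → ℕ)
    (ha : ∑ i, a i = #A) (hav : ∀ i, a i ≤ v i) :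
    ∃ P : OrderedPartition t k v, ∀ i, #(P.1 i ∩ A) = a i := by
  obtain ⟨B, hBA, hB, hBdisj⟩ := exists_pairwise_disjoint_subset_card_eq A a ha
  obtain ⟨C, hCA, hC, hCdisj⟩ := exists_pairwise_disjoint_subset_card_eq Aᶜ (fun i => v i - a i)
    (by rw [sum_tsub_distrib _ fun i _ => hav i, hv, ha, card_compl, Fintype.card_fin])
  have hBC : ∀ i j, Disjoint (B i) (C j) := fun i j =>
    disjoint_of_subset_left (hBA i) (disjoint_of_subset_right (hCA j) disjoint_compl_right)
  have hcard : ∀ i, #(B i ∪ C i) = v i := fun i => by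
    rw [card_union_of_disjoint (hBC i i), hB, hC, Nat.add_sub_cancel' (hav i)]
  have hdisj : Pairwise (Disjoint on fun i => B i ∪ C i) := fun i j hij =>
    disjoint_union_left.2 ⟨disjoint_union_right.2 ⟨hBdisj hij, hBC i j⟩,
      disjoint_union_right.2 ⟨(hBC j i).symm, hCdisj hij⟩⟩
  refine ⟨⟨fun i => B i ∪ C i, hcard, fun i j hij => hdisj hij, eq_univ_of_card _ ?_⟩, fun i => ?_⟩
  · rw [card_biUnion (hdisj.set_pairwise _)]
    simp [hcard, hv]
  · rw [union_inter_distrib_right, inter_eq_left.2 (hBA i),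
      disjoint_iff_inter_eq_empty.1 (disjoint_of_subset_left (hCA i) disjoint_compl_left),
      union_empty, hB]

theorem exists_inter_nonempty_iff (hv : ∑ i, v i = t) (hvk : ∀ i, k ≤ v i)
    {A : Finset (Fin t)} (hA : #A = k) {I : Finset (Fin k)} (hI : I.Nonempty) :
    ∃ P : OrderedPartition t k v, ∀ j, (P.1 j ∩ A).Nonempty ↔ j ∈ I := by
  obtain ⟨i₀, hi₀⟩ := hI
  have hIk : #I ≤ k := by simpa using card_le_univ I
  have hI₀ : 0 < #I := card_pos.2 ⟨i₀, hi₀⟩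
  obtain ⟨P, hP⟩ := exists_card_inter_eq hv A
    (fun j => (if j ∈ I then 1 else 0) + if j = i₀ then k - #I else 0)
    (by simp [sum_add_distrib, hA]; omega) fun j => by have := hvk j; split_ifs <;> omega
  refine ⟨P, fun j => ?_⟩
  rw [← card_pos, hP]
  by_cases hj : j ∈ I
  · simp [hj]
  · simp [hj, show j ≠ i₀ from fun h => hj (h ▸ hi₀)]

end OrderedPartition

section Vanishing

variable {t k : ℕ} {v : Fin k → ℕ} {A : Finset (Fin t)} {φ : ℕ → ℚ}

theorem sub_mul_add_mul_eq_zero (hv : ∑ i, v i = t) (hvk : ∀ i, k ≤ v i) (hA : #A = k)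
    (hφ : ∀ P : OrderedPartition t k v, ∑ f ∈ Fintype.piFinset P.1, φ #{i | f i ∈ A} = 0)
    (i : Fin k) : ((v i : ℚ) - k) * φ 0 + k * φ 1 = 0 := by
  obtain ⟨P, hP⟩ := OrderedPartition.exists_card_inter_eq hv A (Pi.single i k)
    (by rw [sum_pi_single', if_pos (mem_univ i), hA]) fun j => by
      rcases eq_or_ne j i with rfl | hj
      · simpa using hvk j
      · simp [hj]
  have hcount (f : Fin k → Fin t) (hf : f ∈ Fintype.piFinset P.1) :
      #{j | f j ∈ A} = if f i ∈ A then 1 else 0 := by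
    rw [card_filter, sum_eq_single i (fun j _ hj => if_neg fun hfj => ?_) (by simp)]
    have : #(P.1 j ∩ A) = 0 := by rw [hP, Pi.single_eq_of_ne hj]
    exact notMem_empty _ (card_eq_zero.1 this ▸ mem_inter.2 ⟨Fintype.mem_piFinset.1 hf j, hfj⟩)
  have hPi : ∑ y ∈ P.1 i, φ (if y ∈ A then 1 else 0) = k * φ 1 + ((v i : ℚ) - k) * φ 0 := by
    have hin : #{y ∈ P.1 i | y ∈ A} = k := by rw [filter_mem_eq_inter, hP, Pi.single_eq_same]
    have hout := card_filter_add_card_filter_not (s := P.1 i) (· ∈ A)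
    rw [hin, P.2.1 i] at hout
    simp only [apply_ite φ, sum_ite, sum_const, hin, nsmul_eq_mul]
    rw [← hout]
    push_cast
    ring
  have hW : (∏ j ∈ univ.erase i, #(P.1 j)) ≠ 0 :=
    prod_ne_zero_iff.2 fun j _ => by have := hvk j; have := j.pos; rw [P.2.1 j]; omega
  have := hφ P
  rw [sum_congr rfl fun f hf => by rw [hcount f hf],
    sum_piFinset_comp_apply P.1 i fun y => φ (if y ∈ A then 1 else 0), hPi, smul_eq_zero] at this
  linear_combination this.resolve_left hW

theorem eq_zero_of_forall_lt_eq_zero (hv : ∑ i, v i = t) (hvk : ∀ i, k ≤ v i) (hA : #A = k)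
    (hφ : ∀ P : OrderedPartition t k v, ∑ f ∈ Fintype.piFinset P.1, φ #{i | f i ∈ A} = 0)
    {m : ℕ} (hm : 0 < m) (hmk : m ≤ k) (hlt : ∀ j < m, φ j = 0) : φ m = 0 := by
  obtain ⟨I, -, hI⟩ := exists_subset_card_eq (s := (univ : Finset (Fin k))) (by simpa using hmk)
  obtain ⟨P, hP⟩ := OrderedPartition.exists_inter_nonempty_iff hv hvk hA (card_pos.1 (hI ▸ hm))
  have hsub (f : Fin k → Fin t) (hf : f ∈ Fintype.piFinset P.1) :
      ({j | f j ∈ A} : Finset (Fin k)) ⊆ I := fun j hj =>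
    (hP j).1 ⟨f j, mem_inter.2 ⟨Fintype.mem_piFinset.1 hf j, by simpa using hj⟩⟩
  have hterm (f : Fin k → Fin t) (hf : f ∈ Fintype.piFinset P.1) :
      φ #{j | f j ∈ A} = if #{j | f j ∈ A} = m then φ m else 0 := by
    split_ifs with h
    · rw [h]
    · exact hlt _ (lt_of_le_of_ne (hI ▸ card_le_card (hsub f hf)) h)
  have hne (j : Fin k) : (if j ∈ I then P.1 j ∩ A else P.1 j).Nonempty := by
    split_ifs with hj
    · exact (hP j).2 hj
    · rw [← card_pos, P.2.1 j]; have := hvk j; omega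
  choose f₀ hf₀ using hne
  have hf₀P : f₀ ∈ Fintype.piFinset P.1 := Fintype.mem_piFinset.2 fun j => by
    have := hf₀ j
    split_ifs at this
    exacts [(mem_inter.1 this).1, this]
  have hf₀I : ({j | f₀ j ∈ A} : Finset (Fin k)) = I := (hsub f₀ hf₀P).antisymm fun j hj => by
    have := hf₀ j
    rw [if_pos hj] at this
    simpa using (mem_inter.1 this).2
  have hsum := hφ P
  rw [sum_congr rfl hterm, ← sum_filter, sum_const, smul_eq_zero] at hsum
  refine hsum.resolve_left (card_ne_zero.2 ⟨f₀, mem_filter.2 ⟨hf₀P, ?_⟩⟩)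
  rw [hf₀I, hI]

theorem apply_eq_zero_of_le (hv : ∑ i, v i = t) (hvk : ∀ i, k ≤ v i) (hA : #A = k)
    (hφ : ∀ P : OrderedPartition t k v, ∑ f ∈ Fintype.piFinset P.1, φ #{i | f i ∈ A} = 0)
    {i j : Fin k} (hij : v i ≠ v j) {m : ℕ} (hmk : m ≤ k) : φ m = 0 := by
  induction m using Nat.strong_induction_on with
  | _ m ih =>
    rcases Nat.eq_zero_or_pos m with rfl | hm
    · have hi := sub_mul_add_mul_eq_zero hv hvk hA hφ i
      have hj := sub_mul_add_mul_eq_zero hv hvk hA hφ j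
      have : ((v i : ℚ) - v j) * φ 0 = 0 := by linear_combination hi - hj
      exact (mul_eq_zero.1 this).resolve_left (sub_ne_zero.2 (by exact_mod_cast hij))
    · exact eq_zero_of_forall_lt_eq_zero hv hvk hA hφ hm hmk fun l hl => ih l hl (by omega)

theorem sum_isTransversal_stabilizerSum_eq_zero {F : Finset (Fin t) → ℚ}
    (hF : ∀ P : OrderedPartition t k v, ∑ S with IsTransversal P.1 S, F S = 0)
    (A : Finset (Fin t)) (P : OrderedPartition t k v) :
    ∑ S with IsTransversal P.1 S, stabilizerSum A F S = 0 := by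
  unfold stabilizerSum
  rw [sum_comm]
  exact sum_eq_zero fun g _ => by rw [OrderedPartition.sum_isTransversal_smul, hF]

theorem eq_zero_of_forall_sum_isTransversal_eq_zero (hv : ∑ i, v i = t) (hvk : ∀ i, k ≤ v i)
    {i j : Fin k} (hij : v i ≠ v j) {F : Finset (Fin t) → ℚ}
    (hF : ∀ P : OrderedPartition t k v, ∑ S with IsTransversal P.1 S, F S = 0) (hA : #A = k) :
    F A = 0 := by
  obtain ⟨φ, hφ⟩ := exists_stabilizerSum_eq_comp_card_inter A F k
  have hφP (P : OrderedPartition t k v) :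
      ∑ f ∈ Fintype.piFinset P.1, φ #{i | f i ∈ A} = 0 := by
    rw [← sum_isTransversal_stabilizerSum_eq_zero hF A P,
      sum_isTransversal_eq_sum_piFinset P.pairwise_disjoint P.exists_mem]
    refine sum_congr rfl fun f hf => ?_
    have hinj := injective_of_mem_piFinset P.pairwise_disjoint hf
    rw [hφ _ (by rw [card_image_of_injective _ hinj, card_univ, Fintype.card_fin]),
      card_image_inter hinj]
  have hA' : stabilizerSum A F A = 0 := by
    rw [hφ A hA, inter_self, hA, apply_eq_zero_of_le hv hvk hA hφP hij le_rfl]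
  rw [stabilizerSum_self, smul_eq_zero] at hA'
  exact hA'.resolve_left Fintype.card_ne_zero

end Vanishing

section CutMatrix

open Matrix

variable {t k : ℕ} {v : Fin k → ℕ}

theorem cutMatrixV_mulVec_apply (c : {S : Finset (Fin t) // #S = k} → ℚ)
    (P : OrderedPartition t k v) :
    (cutMatrixV t k v *ᵥ c) P =
      ∑ S with IsTransversal P.1 S, if h : #S = k then c ⟨S, h⟩ else 0 := by
  rw [mulVec, dotProduct, sum_filter,
    ← Fintype.sum_subtype_add_sum_subtype (fun S : Finset (Fin t) => #S = k),
    add_eq_left.2 (Fintype.sum_eq_zero _ fun S => by rw [dif_neg S.2, ite_self])]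
  refine Fintype.sum_congr _ _ fun S => ?_
  simp [cutMatrixV, IsTransversal, S.2]

theorem rank_cutMatrixV (hv : ∑ i, v i = t) (hvk : ∀ i, k ≤ v i) {i j : Fin k} (hij : v i ≠ v j) :
    (cutMatrixV t k v).rank = t.choose k := by
  have hinj : Injective (cutMatrixV t k v).mulVecLin := by
    rw [← LinearMap.ker_eq_bot, LinearMap.ker_eq_bot']
    intro c hc
    funext S
    simpa [S.2] using eq_zero_of_forall_sum_isTransversal_eq_zero hv hvk hij
      (fun P => (cutMatrixV_mulVec_apply c P).symm.trans (congrFun hc P)) S.2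
  rw [Matrix.rank, LinearMap.finrank_range_of_inj hinj, Module.finrank_fintype_fun_eq_card,
    Fintype.card_finset_len, Fintype.card_fin]

end CutMatrix

theorem exists_ne_of_sum_eq_of_ne_const {t k : ℕ} {v : Fin k → ℕ} (hv : ∑ i, v i = t)
    (hne : v ≠ fun _ => t / k) : ∃ i j, v i ≠ v j := by
  by_contra! h
  refine hne (funext fun i => ?_)
  rw [← hv, sum_congr rfl fun j _ => h j i, sum_const, card_univ, Fintype.card_fin, smul_eq_mul,
    Nat.mul_div_cancel_left _ i.pos]

theorem unbalanced_cut_matrix_full_rank_general (k : ℕ) :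
    ∃ t₀ : ℕ, ∀ t : ℕ, t₀ ≤ t → k ∣ t → ∀ v : Fin k → ℕ,
      (∑ i, v i = t) → (∀ i, k ≤ v i) → v ≠ (fun _ => t / k) →
      (cutMatrixV t k v).rank = t.choose k := by
  refine ⟨0, fun t _ _ v hv hvk hne => ?_⟩
  obtain ⟨i, j, hij⟩ := exists_ne_of_sum_eq_of_ne_const hv hne
  exact rank_cutMatrixV hv hvk hij

/-- Lemma 4.6: for `k ≥ 2`, sufficiently large `t` divisible by `k`, and any sizes
`v_1,…,v_k ≥ k` summing to `t` with `v` not the constant vector `(t/k,…,t/k)`,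
the intersection matrix `A_{t,k,v}` has full column rank `C(t,k)`. -/
theorem unbalanced_cut_matrix_full_rank (k : ℕ) (hk : 2 ≤ k) :
    ∃ t₀ : ℕ, ∀ t : ℕ, t₀ ≤ t → k ∣ t → ∀ v : Fin k → ℕ,
      (∑ i, v i = t) → (∀ i, k ≤ v i) → v ≠ (fun _ => t / k) →
      (cutMatrixV t k v).rank = t.choose k :=
  unbalanced_cut_matrix_full_rank_general k
end

section
/- Let t be even, t ≥ 4, k = 2, p > 0. Let M be the matrix whose rows are indexed by ordered partitions (A,B) of [t] into two parts of size t/2 and whose columns are indexed by 2-subsets K of [t], with entry M((A,B),K) = 1 - |B ∩ K|. Then rank(M) ≥ t - 1. -/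
/-!
Write `e_x` for the incidence vector of a point `x` on the 2-subsets `K` (`e_x K = 1` iff `x ∈ K`).
The row of `(A, B)` is `1 - ∑_{b ∈ B} e_b`, so two parts `B = D ∪ {z}` and `B' = D ∪ {x}` give
rows whose difference is `e_x - e_z`; the row space therefore contains every `e_x - e_z`.
The `e_x` are the rows of the vertex–edge incidence matrix of the complete graph, which are
linearly independent as soon as there is a triangle (in characteristic `≠ 2`), so the `t` points
`e_x` are affinely independent and the differences `e_x - e_z`, `x ≠ z`, span a space of
dimension `t - 1`.
-/

open Finset

lemma card_inter_insert_of_notMem {α : Type*} [DecidableEq α] {K D : Finset α} {x : α}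
    (hx : x ∉ D) :
    (K ∩ insert x D).card = (K ∩ D).card + if x ∈ K then 1 else 0 := by
  by_cases hxK : x ∈ K
  · rw [inter_insert_of_mem hxK, card_insert_of_notMem (by simp [hx]), if_pos hxK]
  · rw [inter_insert_of_notMem hxK, if_neg hxK, add_zero]

abbrev BalancedBipartition (α : Type*) [Fintype α] [DecidableEq α] (s : ℕ) :=
  {P : Finset α × Finset α // P.1.card = s ∧ P.2.card = s ∧ Disjoint P.1 P.2 ∧ P.1 ∪ P.2 = univ}

def bipartitionMatrix (𝕜 : Type*) [Ring 𝕜] (α : Type*) [Fintype α] [DecidableEq α] (s : ℕ) :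
    Matrix (BalancedBipartition α s) {K : Finset α // K.card = 2} 𝕜 :=
  fun P K => 1 - (((K : Finset α) ∩ P.1.2).card : 𝕜)

variable {α : Type*} [Fintype α] [DecidableEq α]

def BalancedBipartition.ofPart {s : ℕ} (hα : Fintype.card α = s + s) (B : Finset α)
    (hB : B.card = s) : BalancedBipartition α s :=
  ⟨(Bᶜ, B), by rw [card_compl, hB, hα]; omega, hB, disjoint_compl_left,
    by rw [union_comm, union_compl]⟩

def pairIncidence (𝕜 : Type*) [Ring 𝕜] (x : α) (K : {K : Finset α // K.card = 2}) : 𝕜 :=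
  if x ∈ (K : Finset α) then 1 else 0

lemma bipartitionMatrix_sub_eq_pairIncidence_sub {𝕜 : Type*} [Ring 𝕜] {s : ℕ}
    (hα : Fintype.card α = s + s) {D : Finset α} {x z : α} (hx : x ∉ D) (hz : z ∉ D)
    (hxD : (insert x D).card = s) (hzD : (insert z D).card = s) :
    bipartitionMatrix 𝕜 α s (.ofPart hα _ hzD) - bipartitionMatrix 𝕜 α s (.ofPart hα _ hxD) =
      pairIncidence 𝕜 x - pairIncidence 𝕜 z := by
  ext K
  simp only [Pi.sub_apply, bipartitionMatrix, BalancedBipartition.ofPart, pairIncidence,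
    card_inter_insert_of_notMem hx, card_inter_insert_of_notMem hz]
  split_ifs <;> push_cast <;> abel

lemma pairIncidence_sub_mem_span_bipartitionMatrix (𝕜 : Type*) [Ring 𝕜] {s : ℕ}
    (hα : Fintype.card α = s + s) {x z : α} (hxz : x ≠ z) :
    pairIncidence 𝕜 x - pairIncidence 𝕜 z ∈
      Submodule.span 𝕜 (Set.range (bipartitionMatrix 𝕜 α s)) := by
  obtain ⟨D, hD, hDcard⟩ : ∃ D ⊆ ({x, z} : Finset α)ᶜ, D.card = s - 1 :=
    exists_subset_card_eq (by rw [card_compl, card_pair hxz]; omega)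
  have hx : x ∉ D := fun h => by simpa using hD h
  have hz : z ∉ D := fun h => by simpa using hD h
  have hs : 1 ≤ s := by
    have := Fintype.one_lt_card_iff.mpr ⟨x, z, hxz⟩
    omega
  have hxD : (insert x D).card = s := by rw [card_insert_of_notMem hx]; omega
  have hzD : (insert z D).card = s := by rw [card_insert_of_notMem hz]; omega
  rw [← bipartitionMatrix_sub_eq_pairIncidence_sub hα hx hz hxD hzD]
  exact Submodule.sub_mem _ (Submodule.subset_span ⟨_, rfl⟩) (Submodule.subset_span ⟨_, rfl⟩)

lemma linearIndependent_pairIncidence (𝕜 : Type*) [Field 𝕜] [NeZero (2 : 𝕜)]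
    (hα : 2 < Fintype.card α) : LinearIndependent 𝕜 (pairIncidence 𝕜 : α → _) := by
  rw [Fintype.linearIndependent_iff]
  intro g hg
  have hpair : ∀ a c, a ≠ c → g a + g c = 0 := by
    intro a c hac
    have := congrFun hg ⟨{a, c}, card_pair hac⟩
    simpa only [Finset.sum_apply, Pi.smul_apply, pairIncidence, smul_eq_mul, mul_ite, mul_one,
      mul_zero, Pi.zero_apply, sum_ite_mem, univ_inter, sum_pair hac] using this
  obtain ⟨b₁, b₂, b₃, h₁₂, h₁₃, h₂₃⟩ := Fintype.two_lt_card_iff.mp hα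
  have hb₁ : g b₁ = 0 := by
    have h : 2 * g b₁ = 0 := by
      linear_combination hpair _ _ h₁₂ + hpair _ _ h₁₃ - hpair _ _ h₂₃
    exact (mul_eq_zero.mp h).resolve_left two_ne_zero
  intro a
  rcases eq_or_ne a b₁ with rfl | ha
  · exact hb₁
  · linear_combination hpair _ _ ha - hb₁

theorem card_sub_one_le_rank_bipartitionMatrix (𝕜 : Type*) [Field 𝕜] [NeZero (2 : 𝕜)] {s : ℕ}
    (hα : Fintype.card α = s + s) (hα₃ : 2 < Fintype.card α) :
    Fintype.card α - 1 ≤ (bipartitionMatrix 𝕜 α s).rank := by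
  obtain ⟨z⟩ : Nonempty α := Fintype.card_pos_iff.mp (by omega)
  have hindep : LinearIndependent 𝕜 fun x : {x // x ≠ z} =>
      pairIncidence 𝕜 (x : α) - pairIncidence 𝕜 z :=
    (affineIndependent_iff_linearIndependent_vsub 𝕜 (pairIncidence 𝕜 : α → _) z).mp
      ((linearIndependent_pairIncidence 𝕜 hα₃).affineIndependent 𝕜)
  have hspan : Submodule.span 𝕜 (Set.range fun x : {x // x ≠ z} =>
      pairIncidence 𝕜 (x : α) - pairIncidence 𝕜 z) ≤
      Submodule.span 𝕜 (Set.range (bipartitionMatrix 𝕜 α s)) :=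
    Submodule.span_le.mpr <| Set.range_subset_iff.mpr fun x =>
      pairIncidence_sub_mem_span_bipartitionMatrix 𝕜 hα x.2
  calc Fintype.card α - 1 = Fintype.card {x // x ≠ z} := by simp [Fintype.card_subtype_compl]
    _ = _ := (finrank_span_eq_card hindep).symm
    _ ≤ _ := Submodule.finrank_mono hspan
    _ = _ := (Matrix.rank_eq_finrank_span_row _).symm

theorem bipartition_difference_matrix_rank_general (t : ℕ) (ht : 4 ≤ t) (hte : Even t) :
    t - 1 ≤ Matrix.rank (fun (P : {P : Finset (Fin t) × Finset (Fin t) //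
          P.1.card = t / 2 ∧ P.2.card = t / 2 ∧ Disjoint P.1 P.2 ∧ P.1 ∪ P.2 = Finset.univ})
        (K : {S : Finset (Fin t) // S.card = 2}) =>
      (1 : ℚ) - (((K : Finset (Fin t)) ∩ (P : Finset (Fin t) × Finset (Fin t)).2).card : ℚ)) := by
  have hα : Fintype.card (Fin t) = t / 2 + t / 2 := by
    obtain ⟨r, rfl⟩ := hte
    rw [Fintype.card_fin]; omega
  have h := card_sub_one_le_rank_bipartitionMatrix ℚ hα (by rw [Fintype.card_fin]; omega)
  rwa [Fintype.card_fin] at h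

/-- The `k = 2` case of Lemma 5.1: the matrix `M` indexed by ordered balanced bipartitions
`(A,B)` of `[t]` and 2-subsets `K`, with entry `1 - |B ∩ K|`, has rank at least `t - 1`. -/
theorem bipartition_difference_matrix_rank (t : ℕ) (ht : 4 ≤ t) (hte : Even t)
    (p : ℝ) (hp : 0 < p) :
    t - 1 ≤ Matrix.rank (fun (P : {P : Finset (Fin t) × Finset (Fin t) //
          P.1.card = t / 2 ∧ P.2.card = t / 2 ∧ Disjoint P.1 P.2 ∧ P.1 ∪ P.2 = Finset.univ})
        (K : {S : Finset (Fin t) // S.card = 2}) =>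
      (1 : ℚ) - (((K : Finset (Fin t)) ∩ (P : Finset (Fin t) × Finset (Fin t)).2).card : ℚ)) :=
  bipartition_difference_matrix_rank_general t ht hte
end

section
/- Fix k ≥ 2 and 0 ≤ j ≤ k with j ≠ 1. The leading coefficient (in t) of the normalized eigenvalue λ(j)* = ∑_{i=0}^{k} α_i*(t) p_i(j)(t), where α_i*(t) = i!(t/k - 1)^i ∏_{s=k+i}^{2k-1}(t-s) and p_i(j) are the Johnson scheme eigenvalues, equals (1/(k-j)!) · ∑_{s=0}^{j} (-1)^s C(j,s) k^{-(s+k-j)} (s+k-j)!/(k-j)! up to a positive factor; in particular, λ(j)* = Θ(t^{2k-j}) and its leading coefficient is positive, given that ∑_{s=0}^{j} (-1)^s C(j,s) k^{j-s} (s+k-j)!/(k-j)! > 0. -/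
open Filter

/-- `α_i*(t) = i!(t/k-1)^i ∏_{s=k+i}^{2k-1}(t-s)`, the normalized Bose–Mesner coefficient. -/
noncomputable def alphaStar (k i : ℕ) (t : ℝ) : ℝ :=
  (i.factorial : ℝ) * (t / (k : ℝ) - 1) ^ i * ∏ s ∈ Finset.Icc (k + i) (2 * k - 1), (t - (s : ℝ))

/-- The Johnson-scheme eigenvalue `p_i(j)` as a function of real `t` (generalized binomial
`C(t-k+r-j, r) = ∏_{m<r}(t-k+r-j-m)/r!`). -/
noncomputable def johnsonEig (k j i : ℕ) (t : ℝ) : ℝ :=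
  ∑ r ∈ Finset.range (i + 1), (-1 : ℝ) ^ (i - r) * ((k - r).choose (i - r) : ℝ) *
    ((∏ m ∈ Finset.range r, (t - (k : ℝ) + (r : ℝ) - (j : ℝ) - (m : ℝ))) / (r.factorial : ℝ)) *
    ((k - j).choose r : ℝ)

/-! After dividing by `t ^ (2k - j)`, each summand factors as `(α_i*(t) / t^k) · (p_i(j)(t) / t^(k-j))`.
A product of `r` factors `t - c` divided by `t ^ n` tends to `1` if `r = n` and to `0` if `r < n`,
so `α_i*(t) / t^k → i!/k^i`, while in `p_i(j)` only the summand `r = k - j` survives, giving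
`(-1)^(i-k+j) C(j, i-k+j) / (k-j)!` for `i ≥ k - j` and `0` otherwise. Substituting `i = s + k - j`
yields the leading coefficient, which is Berger's sum divided by `k ^ k`. -/

open Finset

theorem tendsto_sub_div_self_atTop (c : ℝ) : Tendsto (fun t : ℝ => (t - c) / t) atTop (nhds 1) := by
  have h : Tendsto (fun t : ℝ => 1 - c / t) atTop (nhds (1 - 0)) :=
    tendsto_const_nhds.sub (tendsto_const_nhds.div_atTop tendsto_id)
  rw [sub_zero] at h
  refine h.congr' ?_
  filter_upwards [eventually_ne_atTop 0] with t ht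
  field_simp

theorem tendsto_prod_sub_div_pow_card {ι : Type*} (s : Finset ι) (c : ι → ℝ) :
    Tendsto (fun t : ℝ => (∏ x ∈ s, (t - c x)) / t ^ #s) atTop (nhds 1) := by
  have h := tendsto_finsetProd s fun x _ => tendsto_sub_div_self_atTop (c x)
  simpa only [prod_const_one, prod_div_distrib, prod_const] using h

theorem tendsto_prod_sub_div_pow {ι : Type*} (s : Finset ι) (c : ι → ℝ) {n : ℕ} (hn : #s ≤ n) :
    Tendsto (fun t : ℝ => (∏ x ∈ s, (t - c x)) / t ^ n) atTop
      (nhds (if #s = n then 1 else 0)) := by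
  obtain ⟨d, rfl⟩ := Nat.exists_eq_add_of_le hn
  have h := (tendsto_prod_sub_div_pow_card s c).mul (tendsto_inv_atTop_zero.pow d)
  rw [one_mul, zero_pow_eq] at h
  convert h using 2 with t
  · rw [pow_add, inv_pow, div_mul_eq_div_div, div_eq_mul_inv _ (t ^ d)]
  · simp

theorem tendsto_alphaStar_div_pow (k i : ℕ) (hk : 0 < k) (hik : i ≤ k) :
    Tendsto (fun t : ℝ => alphaStar k i t / t ^ k) atTop
      (nhds ((i.factorial : ℝ) / (k : ℝ) ^ i)) := by
  have hcard : #(Icc (k + i) (2 * k - 1)) = k - i := by rw [Nat.card_Icc]; omega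
  have h := ((tendsto_sub_div_self_atTop k).pow i).mul
    (tendsto_prod_sub_div_pow_card (Icc (k + i) (2 * k - 1)) fun s => (s : ℝ))
  rw [one_pow, mul_one] at h
  have h' := h.const_mul ((i.factorial : ℝ) / (k : ℝ) ^ i)
  rw [mul_one, hcard] at h'
  refine h'.congr' ?_
  filter_upwards [eventually_ne_atTop 0] with t ht
  have hk0 : (k : ℝ) ≠ 0 := by positivity
  rw [alphaStar, show t ^ k = t ^ i * t ^ (k - i) by rw [← pow_add, Nat.add_sub_cancel' hik],
    show t / k - 1 = (t - k) / k by field_simp]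
  simp only [div_pow]
  field_simp

theorem tendsto_johnsonEig_div_pow (k j i : ℕ) (hjk : j ≤ k) :
    Tendsto (fun t : ℝ => johnsonEig k j i t / t ^ (k - j)) atTop
      (nhds (if k - j ≤ i then
        (-1 : ℝ) ^ (i - (k - j)) * (j.choose (i - (k - j)) : ℝ) / ((k - j).factorial : ℝ)
        else 0)) := by
  set a : ℕ → ℝ := fun r => (-1 : ℝ) ^ (i - r) * ((k - r).choose (i - r) : ℝ) *
    ((k - j).choose r : ℝ) / (r.factorial : ℝ)
  have hterm : ∀ r, Tendsto (fun t : ℝ =>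
      a r * ((∏ m ∈ range r, (t - ((k : ℝ) - r + j + m))) / t ^ (k - j))) atTop
      (nhds (a r * if r = k - j then 1 else 0)) := by
    intro r
    by_cases hr : r ≤ k - j
    · simpa using (tendsto_prod_sub_div_pow (range r) (fun m : ℕ => (k : ℝ) - r + j + m)
        (by simpa using hr)).const_mul (a r)
    · have ha : a r = 0 := by simp [a, Nat.choose_eq_zero_of_lt (not_le.mp hr)]
      simp [ha]
  convert tendsto_finsetSum (range (i + 1)) fun r _ => hterm r using 2 with t
  · rw [johnsonEig, sum_div]
    refine sum_congr rfl fun r _ => ?_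
    rw [show ∏ m ∈ range r, (t - k + r - j - m) = ∏ m ∈ range r, (t - ((k : ℝ) - r + j + m)) from
      prod_congr rfl fun m _ => by ring]
    ring
  · simp [a, mul_ite, Nat.sub_sub_self hjk]

theorem tendsto_lambdaStar_div_pow (k j : ℕ) (hk : 0 < k) (hjk : j ≤ k) :
    Tendsto (fun t : ℝ =>
        (∑ i ∈ range (k + 1), alphaStar k i t * johnsonEig k j i t) / t ^ (2 * k - j))
      atTop (nhds (∑ s ∈ range (j + 1), (-1 : ℝ) ^ s * (j.choose s : ℝ) *
        ((k : ℝ) ^ (s + (k - j)))⁻¹ * ((s + (k - j)).factorial : ℝ) / ((k - j).factorial : ℝ))) := by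
  have h := tendsto_finsetSum (range (k + 1)) fun i hi =>
    (tendsto_alphaStar_div_pow k i hk (Nat.lt_succ_iff.mp (mem_range.mp hi))).mul
      (tendsto_johnsonEig_div_pow k j i hjk)
  convert h using 2 with t
  · rw [sum_div, show 2 * k - j = k + (k - j) by omega, pow_add]
    exact sum_congr rfl fun i _ => mul_div_mul_comm _ _ _ _
  · conv_rhs => rw [show k + 1 = (k - j) + (j + 1) by omega, sum_range_add,
      sum_eq_zero fun i hi => by rw [if_neg (not_le.mpr (mem_range.mp hi)), mul_zero], zero_add]
    refine sum_congr rfl fun s _ => ?_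
    rw [if_pos (Nat.le_add_right _ _), Nat.add_sub_cancel_left, add_comm (k - j) s]
    ring

theorem leadingCoeff_mul_pow_eq_berger (k j : ℕ) (hk : 0 < k) (hjk : j ≤ k) :
    (∑ s ∈ range (j + 1), (-1 : ℝ) ^ s * (j.choose s : ℝ) * ((k : ℝ) ^ (s + (k - j)))⁻¹ *
      ((s + (k - j)).factorial : ℝ) / ((k - j).factorial : ℝ)) * (k : ℝ) ^ k =
    ∑ s ∈ range (j + 1), (-1 : ℝ) ^ s * (j.choose s : ℝ) * (k : ℝ) ^ (j - s) *
      ((s + (k - j)).factorial : ℝ) / ((k - j).factorial : ℝ) := by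
  rw [sum_mul]
  refine sum_congr rfl fun s hs => ?_
  have hsj : s ≤ j := Nat.lt_succ_iff.mp (mem_range.mp hs)
  have hpow : ((k : ℝ) ^ (s + (k - j)))⁻¹ * (k : ℝ) ^ k = (k : ℝ) ^ (j - s) := by
    rw [show (k : ℝ) ^ k = (k : ℝ) ^ (s + (k - j)) * (k : ℝ) ^ (j - s) by
      rw [← pow_add]; congr 1; omega, inv_mul_cancel_left₀ (by positivity)]
  rw [← hpow]
  ring

theorem lambda_star_leading_coefficient_general (k j : ℕ) (hk : 2 ≤ k) (hjk : j ≤ k)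
    (hB : 0 < ∑ s ∈ Finset.range (j + 1),
      (-1 : ℝ) ^ s * (j.choose s : ℝ) * (k : ℝ) ^ (j - s) *
        ((s + (k - j)).factorial : ℝ) / ((k - j).factorial : ℝ)) :
    ∃ L : ℝ,
      Tendsto (fun t : ℝ =>
          (∑ i ∈ Finset.range (k + 1), alphaStar k i t * johnsonEig k j i t) / t ^ (2 * k - j))
        atTop (nhds L) ∧
      (∃ c : ℝ, 0 < c ∧ L = c * ((1 / ((k - j).factorial : ℝ)) *
        ∑ s ∈ Finset.range (j + 1),
          (-1 : ℝ) ^ s * (j.choose s : ℝ) * ((k : ℝ) ^ (s + (k - j)))⁻¹ *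
            ((s + (k - j)).factorial : ℝ) / ((k - j).factorial : ℝ))) ∧
      0 < L := by
  have hk0 : 0 < k := by omega
  refine ⟨_, tendsto_lambdaStar_div_pow k j hk0 hjk, ⟨(k - j).factorial, by positivity, ?_⟩, ?_⟩
  · rw [one_div, mul_inv_cancel_left₀ (by positivity)]
  · rw [← leadingCoeff_mul_pow_eq_berger k j hk0 hjk] at hB
    exact pos_of_mul_pos_left hB (by positivity)

/-- Asymptotic computation from the proof of Lemma 4.3: for `k ≥ 2`, `0 ≤ j ≤ k`, `j ≠ 1`,
the normalized eigenvalue `λ(j)* = ∑_{i=0}^{k} α_i*(t) p_i(j)(t)` satisfies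
`λ(j)* = Θ(t^{2k-j})`, with leading coefficient equal (up to a positive factor) to
`(1/(k-j)!) ∑_{s=0}^{j} (-1)^s C(j,s) k^{-(s+k-j)} (s+k-j)!/(k-j)!`, which is positive given
Berger's inequality `∑_{s=0}^{j} (-1)^s C(j,s) k^{j-s} (s+k-j)!/(k-j)! > 0`. -/
theorem lambda_star_leading_coefficient (k j : ℕ) (hk : 2 ≤ k) (hjk : j ≤ k) (hj1 : j ≠ 1)
    (hB : 0 < ∑ s ∈ Finset.range (j + 1),
      (-1 : ℝ) ^ s * (j.choose s : ℝ) * (k : ℝ) ^ (j - s) *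
        ((s + (k - j)).factorial : ℝ) / ((k - j).factorial : ℝ)) :
    ∃ L : ℝ,
      Tendsto (fun t : ℝ =>
          (∑ i ∈ Finset.range (k + 1), alphaStar k i t * johnsonEig k j i t) / t ^ (2 * k - j))
        atTop (nhds L) ∧
      (∃ c : ℝ, 0 < c ∧ L = c * ((1 / ((k - j).factorial : ℝ)) *
        ∑ s ∈ Finset.range (j + 1),
          (-1 : ℝ) ^ s * (j.choose s : ℝ) * ((k : ℝ) ^ (s + (k - j)))⁻¹ *
            ((s + (k - j)).factorial : ℝ) / ((k - j).factorial : ℝ))) ∧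
      0 < L :=
  lambda_star_leading_coefficient_general k j hk hjk hB
end
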